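/- arXiv:2508.03833 — 6 statements merged into one kernel-verified Lean document; each statement's English description precedes it below -/
import Mathlib

section
/- Let X be a real random variable with finite support, with cumulative distribution function F(x) = P(X ≤ x), left limit F(x⁻) = P(X < x), and probability mass function p(x) = P(X = x). Let U ~ Uniform[0,1] be independent of X and define F̃^U(x) := F(x⁻) + U · p(x). Then F̃^U(X) is distributed Uniform[0,1]; consequently, for every σ > 0, σ · Φ^{−1}( F̃^U(X) ) ~ N(0, σ²), where Φ is the standard normal cumulative distribution function. -/
/-!
Conditionally on `X = x`, the transform `F(x⁻) + U · p(x)` is uniform on `[F(x⁻), F(x)]` because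
`U` is independent of `X`. These intervals tile `[0, 1]`, so summing over the finitely many atoms
gives `F̃^U(X)` the cdf of the uniform law. For the Gaussian part, the generalized inverse `Q` of
any cdf `F` satisfies `Q u ≤ x ↔ u ≤ F x` for `u ∈ (0, 1)` by right-continuity of `F`, so `Q`
pushes the uniform law forward to the law with cdf `F`; scaling `N(0, 1)` by `σ` gives `N(0, σ²)`.
-/

open MeasureTheory ProbabilityTheory
open scoped ENNReal

/-- The standard normal cumulative distribution function. -/
noncomputable def stdNormalCDF (x : ℝ) : ℝ := ((gaussianReal 0 1) (Set.Iic x)).toReal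

/-- The (generalized) inverse of the standard normal CDF. -/
noncomputable def stdNormalCDFInv (u : ℝ) : ℝ := sInf {x : ℝ | u ≤ stdNormalCDF x}

open Set Filter

lemma volume_restrict_Icc_zero_one_Iic (s : ℝ) :
    volume.restrict (Icc (0 : ℝ) 1) (Iic s) = ENNReal.ofReal (min s 1) := by
  have : Iic s ∩ Icc 0 1 = Icc 0 (min s 1) := by
    ext; simp only [mem_inter_iff, mem_Iic, mem_Icc, le_min_iff]; tauto
  rw [Measure.restrict_apply measurableSet_Iic, this, Real.volume_Icc, sub_zero]

lemma Real.volume_restrict_Icc_eq_restrict_Ioo {a b : ℝ} :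
    volume.restrict (Icc a b) = volume.restrict (Ioo a b) :=
  Measure.restrict_congr_set Ioo_ae_eq_Icc |>.symm

-- `min (max t 0) M` is the length of `Iic t ∩ Icc 0 M`.
lemma min_max_add_min_max_sub {t M q : ℝ} (hM : 0 ≤ M) (hq : 0 ≤ q) :
    min (max t 0) M + min (max (t - M) 0) q = min (max t 0) (M + q) := by
  simp only [min_def, max_def]
  split_ifs <;> linarith

lemma Finset.sum_min_max_sub_sum_filter_lt (S : Finset ℝ) {w : ℝ → ℝ} (hw : ∀ x ∈ S, 0 ≤ w x)
    (t : ℝ) :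
    ∑ x ∈ S, min (max (t - ∑ y ∈ S with y < x, w y) 0) (w x)
      = min (max t 0) (∑ x ∈ S, w x) := by
  induction S using Finset.induction_on_max with
  | empty => simp
  | insert a S ha ih =>
    have haS : a ∉ S := fun h => (ha a h).false
    have hfilter_a : {y ∈ insert a S | y < a} = S := by
      rw [Finset.filter_insert, if_neg (lt_irrefl a)]
      exact Finset.filter_true_of_mem ha
    have hfilter : ∑ x ∈ S, min (max (t - ∑ y ∈ insert a S with y < x, w y) 0) (w x)
        = ∑ x ∈ S, min (max (t - ∑ y ∈ S with y < x, w y) 0) (w x) :=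
      Finset.sum_congr rfl fun x hx => by
        rw [Finset.filter_insert, if_neg (ha x hx).not_gt]
    have hwS : ∀ x ∈ S, 0 ≤ w x := fun x hx => hw x (Finset.mem_insert_of_mem hx)
    rw [Finset.sum_insert haS, Finset.sum_insert haS, hfilter_a, hfilter, ih hwS, add_comm,
      add_comm (w a), min_max_add_min_max_sub (Finset.sum_nonneg hwS)
        (hw a (Finset.mem_insert_self a S))]

lemma Measurable.comp_of_countable_range {Ω α β : Type*} [MeasurableSpace Ω] [MeasurableSpace α]
    [MeasurableSingletonClass α] [MeasurableSpace β] {f : Ω → α} (hf : Measurable f)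
    (hc : (range f).Countable) (g : α → β) : Measurable fun ω => g (f ω) := by
  have := hc.to_subtype
  exact (measurable_of_countable (g ∘ Subtype.val)).comp
    (hf.subtype_mk (h := mem_range_self) : Measurable (rangeFactorization f))

lemma MeasureTheory.measure_eq_sum_measure_preimage_singleton_inter {Ω α : Type*}
    [MeasurableSpace Ω] [MeasurableSpace α] [MeasurableSingletonClass α] {μ : Measure Ω}
    {f : Ω → α} (hf : Measurable f) {S : Finset α} (hS : ∀ ω, f ω ∈ S) (E : Set Ω) :
    μ E = ∑ y ∈ S, μ (f ⁻¹' {y} ∩ E) := by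
  have hS_univ : f ⁻¹' S = univ := eq_univ_of_forall hS
  rw [← Measure.restrict_apply_univ, ← hS_univ,
    ← sum_measure_preimage_singleton _ fun y _ => hf (measurableSet_singleton y)]
  exact Finset.sum_congr rfl fun y _ => Measure.restrict_apply (hf (measurableSet_singleton y))

lemma MeasureTheory.measure_preimage_eq_sum_filter {Ω α : Type*} [MeasurableSpace Ω]
    [MeasurableSpace α] [MeasurableSingletonClass α] {μ : Measure Ω} {f : Ω → α}
    (hf : Measurable f) {S : Finset α} (hS : ∀ ω, f ω ∈ S) (s : Set α) [DecidablePred (· ∈ s)] :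
    μ (f ⁻¹' s) = ∑ y ∈ S with y ∈ s, μ (f ⁻¹' {y}) := by
  rw [measure_eq_sum_measure_preimage_singleton_inter hf hS, Finset.sum_filter]
  refine Finset.sum_congr rfl fun y _ => ?_
  rw [← preimage_inter]
  split_ifs with hy
  · rw [singleton_inter_of_mem hy]
  · rw [singleton_inter_eq_empty.2 hy, preimage_empty, measure_empty]

namespace ProbabilityTheory

-- Junk outside `(0, 1)`: for `u ≤ 0` the set is all of `ℝ`, for `u > 1` it is empty.
noncomputable def quantile (μ : Measure ℝ) (u : ℝ) : ℝ := sInf {x | u ≤ cdf μ x}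

variable {μ : Measure ℝ} {u : ℝ}

lemma bddBelow_le_cdf (hu : 0 < u) : BddBelow {x | u ≤ cdf μ x} := by
  obtain ⟨a, ha⟩ := eventually_atBot.1 ((tendsto_cdf_atBot μ).eventually (gt_mem_nhds hu))
  refine ⟨a, fun x hx => le_of_not_ge fun hxa => ?_⟩
  exact (ha x hxa).not_ge hx

lemma nonempty_le_cdf (hu : u < 1) : {x | u ≤ cdf μ x}.Nonempty :=
  ((tendsto_cdf_atTop μ).eventually (le_mem_nhds hu)).exists

lemma le_cdf_quantile (h1 : u < 1) : u ≤ cdf μ (quantile μ u) := by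
  have hright : ∀ y > quantile μ u, u ≤ cdf μ y := fun y hy => by
    obtain ⟨x, hx, hxy⟩ := exists_lt_of_csInf_lt (nonempty_le_cdf h1) hy
    exact hx.trans (monotone_cdf μ hxy.le)
  exact ge_of_tendsto (((cdf μ).right_continuous _).mono Ioi_subset_Ici_self)
    (eventually_nhdsWithin_of_forall hright)

lemma quantile_le_iff (h0 : 0 < u) (h1 : u < 1) {x : ℝ} :
    quantile μ u ≤ x ↔ u ≤ cdf μ x :=
  ⟨fun h => (le_cdf_quantile h1).trans (monotone_cdf μ h),
    fun h => csInf_le (bddBelow_le_cdf h0) h⟩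

lemma monotoneOn_quantile : MonotoneOn (quantile μ) (Ioo 0 1) := fun _ hu _ hv huv =>
  (quantile_le_iff hu.1 hu.2).2 (huv.trans (le_cdf_quantile hv.2))

lemma aemeasurable_quantile : AEMeasurable (quantile μ) (volume.restrict (Icc 0 1)) := by
  rw [Real.volume_restrict_Icc_eq_restrict_Ioo]
  exact aemeasurable_restrict_of_monotoneOn measurableSet_Ioo monotoneOn_quantile

theorem map_quantile_uniform [IsProbabilityMeasure μ] :
    (volume.restrict (Icc 0 1)).map (quantile μ) = μ := by
  refine Measure.ext_of_Iic _ _ fun x => ?_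
  have hpre : quantile μ ⁻¹' Iic x ∩ Ioo 0 1 = Iic (cdf μ x) ∩ Ioo 0 1 := by
    ext u
    simp only [mem_inter_iff, mem_preimage, mem_Iic, mem_Ioo, and_congr_left_iff, and_imp]
    exact fun h0 h1 => quantile_le_iff h0 h1
  rw [Measure.map_apply_of_aemeasurable aemeasurable_quantile measurableSet_Iic,
    Real.volume_restrict_Icc_eq_restrict_Ioo, Measure.restrict_apply' measurableSet_Ioo, hpre,
    ← Measure.restrict_apply' measurableSet_Ioo, ← Real.volume_restrict_Icc_eq_restrict_Ioo,
    volume_restrict_Icc_zero_one_Iic, min_eq_left (cdf_le_one μ x), ofReal_cdf]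

end ProbabilityTheory

section RandomizedPIT

variable {Ω : Type*} [MeasurableSpace Ω] {P : Measure Ω} {X U : Ω → ℝ}

noncomputable def randomizedPIT (P : Measure Ω) (X U : Ω → ℝ) (ω : Ω) : ℝ :=
  (P {ω' | X ω' < X ω}).toReal + U ω * (P {ω' | X ω' = X ω}).toReal

lemma measure_preimage_inter_affine_le [IsFiniteMeasure P] (hU : Measurable U)
    (hUlaw : P.map U = volume.restrict (Icc 0 1)) (hindep : IndepFun X U P)
    {A : Set ℝ} (hA : MeasurableSet A) (c t : ℝ) :
    P (X ⁻¹' A ∩ {ω | c + U ω * (P (X ⁻¹' A)).toReal ≤ t})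
      = ENNReal.ofReal (min (max (t - c) 0) (P (X ⁻¹' A)).toReal) := by
  set p := (P (X ⁻¹' A)).toReal with hp
  rcases (show 0 ≤ p from ENNReal.toReal_nonneg).eq_or_lt with hp0 | hp0
  · have hnull : P (X ⁻¹' A) = 0 :=
      (ENNReal.toReal_eq_zero_iff _).1 hp0.symm |>.resolve_right (measure_ne_top _ _)
    rw [← hp0, min_eq_right (le_max_right _ _), ENNReal.ofReal_zero]
    exact measure_mono_null inter_subset_left hnull
  have hset : {ω | c + U ω * p ≤ t} = U ⁻¹' Iic ((t - c) / p) := by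
    ext ω
    rw [mem_ofPred, mem_preimage, mem_Iic, le_div_iff₀ hp0, le_sub_iff_add_le']
  rw [hset, hindep.measure_inter_preimage_eq_mul _ _ hA measurableSet_Iic,
    ← Measure.map_apply hU measurableSet_Iic, hUlaw, volume_restrict_Icc_zero_one_Iic,
    ← ENNReal.ofReal_toReal (measure_ne_top P _), ← hp, ← ENNReal.ofReal_mul hp0.le]
  rcases le_total (t - c) 0 with h | h
  · rw [ENNReal.ofReal_of_nonpos, max_eq_right h, min_eq_left hp0.le, ENNReal.ofReal_zero]
    exact mul_nonpos_of_nonneg_of_nonpos hp0.le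
      ((min_le_left _ _).trans (div_nonpos_of_nonpos_of_nonneg h hp0.le))
  · rw [mul_min_of_nonneg _ _ hp0.le, mul_div_cancel₀ _ hp0.ne', mul_one, max_eq_left h]

lemma measurable_randomizedPIT (hX : Measurable X) (hU : Measurable U)
    (hfin : (range X).Finite) : Measurable (randomizedPIT P X U) :=
  (hX.comp_of_countable_range hfin.countable fun x => (P (X ⁻¹' Iio x)).toReal).add
    (hU.mul (hX.comp_of_countable_range hfin.countable fun x => (P (X ⁻¹' {x})).toReal))

theorem map_randomizedPIT [IsProbabilityMeasure P] (hX : Measurable X) (hU : Measurable U)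
    (hfin : (range X).Finite) (hUlaw : P.map U = volume.restrict (Icc 0 1))
    (hindep : IndepFun X U P) :
    P.map (randomizedPIT P X U) = volume.restrict (Icc 0 1) := by
  classical
  set S := hfin.toFinset
  have hXS : ∀ ω, X ω ∈ S := fun ω => hfin.mem_toFinset.2 (mem_range_self ω)
  set p : ℝ → ℝ := fun x => (P (X ⁻¹' {x})).toReal
  set c : ℝ → ℝ := fun x => (P (X ⁻¹' Iio x)).toReal
  have hc : ∀ x, c x = ∑ y ∈ S with y < x, p y := fun x => by
    simp only [c, p, measure_preimage_eq_sum_filter hX hXS (Iio x), mem_Iio,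
      ENNReal.toReal_sum fun _ _ => measure_ne_top _ _]
  have hp_sum : ∑ x ∈ S, p x = 1 := by
    have hsum := measure_preimage_eq_sum_filter hX hXS (μ := P) univ
    simp only [preimage_univ, measure_univ, mem_univ, Finset.filter_true] at hsum
    simp only [p, ← ENNReal.toReal_sum fun _ _ => measure_ne_top _ _, ← hsum, ENNReal.toReal_one]
  have hfiber : ∀ x t, X ⁻¹' {x} ∩ randomizedPIT P X U ⁻¹' Iic t
      = X ⁻¹' {x} ∩ {ω | c x + U ω * p x ≤ t} := fun x t => by
    ext ω
    simp only [mem_inter_iff, mem_preimage, mem_singleton_iff, mem_Iic, mem_ofPred]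
    exact and_congr_right fun h => by rw [randomizedPIT, ← h]; rfl
  refine Measure.ext_of_Iic _ _ fun t => ?_
  calc P.map (randomizedPIT P X U) (Iic t)
      = ∑ x ∈ S, P (X ⁻¹' {x} ∩ randomizedPIT P X U ⁻¹' Iic t) := by
        rw [Measure.map_apply (measurable_randomizedPIT hX hU hfin) measurableSet_Iic]
        exact measure_eq_sum_measure_preimage_singleton_inter hX hXS _
    _ = ∑ x ∈ S, ENNReal.ofReal (min (max (t - c x) 0) (p x)) := by
        refine Finset.sum_congr rfl fun x _ => ?_
        rw [hfiber]
        exact measure_preimage_inter_affine_le hU hUlaw hindep (measurableSet_singleton x) _ _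
    _ = ENNReal.ofReal (min (max t 0) 1) := by
        rw [← ENNReal.ofReal_sum_of_nonneg fun x _ => le_min (le_max_right _ _)
          ENNReal.toReal_nonneg]
        simp only [hc]
        rw [Finset.sum_min_max_sub_sum_filter_lt S (fun _ _ => ENNReal.toReal_nonneg), hp_sum]
    _ = volume.restrict (Icc 0 1) (Iic t) := by
        rw [volume_restrict_Icc_zero_one_Iic]
        rcases le_total t 0 with h | h
        · rw [ENNReal.ofReal_of_nonpos (min_le_left _ _ |>.trans h), max_eq_right h,
            min_eq_left zero_le_one, ENNReal.ofReal_zero]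
        · rw [max_eq_left h]

end RandomizedPIT

lemma stdNormalCDFInv_eq_quantile : stdNormalCDFInv = quantile (gaussianReal 0 1) := by
  funext u
  simp only [stdNormalCDFInv, stdNormalCDF, quantile, cdf_eq_real, measureReal_def]

/-- **randomized probability integral transform.** For a random variable `X`
with finite support, independent `U ~ Uniform[0,1]`, and
`F̃^U(x) := F(x⁻) + U · P(X = x)`, the random variable `F̃^U(X)` is `Uniform[0,1]`;
consequently `σ · Φ⁻¹(F̃^U(X)) ~ N(0,σ²)` for every `σ > 0`. -/
theorem randomized_PIT_finite_support {Ω : Type*} [MeasurableSpace Ω]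
    (P : Measure Ω) [IsProbabilityMeasure P]
    (X U : Ω → ℝ) (hX : Measurable X) (hU : Measurable U)
    (hfin : (Set.range X).Finite)
    (hUlaw : P.map U = (volume : Measure ℝ).restrict (Set.Icc 0 1))
    (hindep : IndepFun X U P) :
    P.map (fun ω => (P {ω' | X ω' < X ω}).toReal + U ω * (P {ω' | X ω' = X ω}).toReal)
        = (volume : Measure ℝ).restrict (Set.Icc 0 1) ∧
      ∀ σ : ℝ, 0 < σ →
        P.map (fun ω => σ * stdNormalCDFInv
              ((P {ω' | X ω' < X ω}).toReal + U ω * (P {ω' | X ω' = X ω}).toReal))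
          = gaussianReal 0 (Real.toNNReal (σ ^ 2)) := by
  have hPIT := map_randomizedPIT hX hU hfin hUlaw hindep
  refine ⟨hPIT, fun σ _ => ?_⟩
  have hQ : AEMeasurable (quantile (gaussianReal 0 1)) (P.map (randomizedPIT P X U)) :=
    hPIT ▸ aemeasurable_quantile
  have hQ_PIT := hQ.comp_aemeasurable (measurable_randomizedPIT hX hU hfin).aemeasurable
  calc P.map (fun ω => σ * stdNormalCDFInv (randomizedPIT P X U ω))
      = ((P.map (randomizedPIT P X U)).map (quantile (gaussianReal 0 1))).map (σ * ·) := by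
        rw [hQ.map_map_of_aemeasurable (measurable_randomizedPIT hX hU hfin).aemeasurable,
          (measurable_const_mul σ).aemeasurable.map_map_of_aemeasurable hQ_PIT,
          stdNormalCDFInv_eq_quantile]
        rfl
    _ = gaussianReal 0 (σ ^ 2).toNNReal := by
        rw [hPIT, map_quantile_uniform, gaussianReal_map_const_mul, mul_zero, mul_one,
          Real.toNNReal_of_nonneg (sq_nonneg σ)]
end

section
/- Let R > 0 and let Y be a random variable with Y ∈ [0,R] almost surely and Var(Y) = σ². Then 4σ² ≤ R², and |Y − E[Y]| ≤ (R + √(R² − 4σ²))/2 almost surely. -/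
/-!
By the Bhatia–Davis inequality, `Var Y ≤ (R - m) m` where `m = E[Y]`, and this is at most `R² / 4`.
Since `(R - 2m)² = R² - 4 (R - m) m ≤ R² - 4 Var Y`, the larger of the two distances `m` and `R - m`
from the mean to the ends of `[0, R]`, which is `(R + |R - 2m|) / 2`, is at most
`(R + √(R² - 4 Var Y)) / 2`.
-/

open MeasureTheory ProbabilityTheory

lemma abs_sub_le_of_mem_Icc {a b y m : ℝ} (hy : y ∈ Set.Icc a b) :
    |y - m| ≤ ((b - a) + |a + b - 2 * m|) / 2 := by
  rw [abs_le]
  cases abs_cases (a + b - 2 * m) <;> constructor <;> linarith [hy.1, hy.2]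

lemma abs_add_sub_two_mul_le_sqrt {a b m v : ℝ} (h : v ≤ (b - m) * (m - a)) :
    |a + b - 2 * m| ≤ √((b - a) ^ 2 - 4 * v) :=
  Real.abs_le_sqrt (by nlinarith)

theorem ae_abs_sub_integral_le_of_mem_Icc {Ω : Type*} [MeasurableSpace Ω] {μ : Measure Ω}
    [IsProbabilityMeasure μ] {a b : ℝ} {X : Ω → ℝ} (h : ∀ᵐ ω ∂μ, X ω ∈ Set.Icc a b)
    (hX : AEMeasurable X μ) :
    ∀ᵐ ω ∂μ, |X ω - μ[X]| ≤ ((b - a) + √((b - a) ^ 2 - 4 * variance X μ)) / 2 := by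
  have hmean := abs_add_sub_two_mul_le_sqrt (variance_le_sub_mul_sub h hX)
  filter_upwards [h] with ω hω
  exact (abs_sub_le_of_mem_Icc hω).trans (by gcongr)

theorem range_variance_bound_general {Ω : Type*} [MeasurableSpace Ω]
    (P : Measure Ω) [IsProbabilityMeasure P]
    (R σ : ℝ) (Y : Ω → ℝ) (hYmeas : Measurable Y)
    (hbound : ∀ᵐ ω ∂P, Y ω ∈ Set.Icc 0 R)
    (hvar : variance Y P = σ ^ 2) :
    4 * σ ^ 2 ≤ R ^ 2 ∧
      ∀ᵐ ω ∂P, |Y ω - ∫ x, Y x ∂P| ≤ (R + Real.sqrt (R ^ 2 - 4 * σ ^ 2)) / 2 := by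
  have hpopoviciu := variance_le_sq_of_bounded hbound hYmeas.aemeasurable
  rw [hvar] at hpopoviciu
  refine ⟨by linarith, ?_⟩
  simpa [hvar] using ae_abs_sub_integral_le_of_mem_Icc hbound hYmeas.aemeasurable

/-- If `Y ∈ [0,R]` almost surely and `Var(Y) = σ²`, then `4σ² ≤ R²` and
`|Y − E[Y]| ≤ (R + √(R² − 4σ²))/2` almost surely. -/
theorem range_variance_bound {Ω : Type*} [MeasurableSpace Ω]
    (P : Measure Ω) [IsProbabilityMeasure P]
    (R σ : ℝ) (hR : 0 < R) (Y : Ω → ℝ) (hYmeas : Measurable Y)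
    (hbound : ∀ᵐ ω ∂P, Y ω ∈ Set.Icc 0 R)
    (hvar : variance Y P = σ ^ 2) :
    4 * σ ^ 2 ≤ R ^ 2 ∧
      ∀ᵐ ω ∂P, |Y ω - ∫ x, Y x ∂P| ≤ (R + Real.sqrt (R ^ 2 - 4 * σ ^ 2)) / 2 :=
  range_variance_bound_general P R σ Y hYmeas hbound hvar
end

section
/- Suppose Assumption (R,σ) holds and fix integers 1 ≤ k < n. With the exchangeable pair W'_k := W_k + X_J − X_I (I ~ Uniform{1,…,k}, J ~ Uniform{k+1,…,n}, independent of each other and of (X_i)), one has almost surely E[ W'_k − W_k | X_1, …, X_n ] = −( n/(k(n−k)) ) · W_k. -/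
/-!
The random indices `I ~ Uniform{0,…,k-1}` and `J ~ Uniform{k,…,n-1}` live on their own factor of
the product space, so conditioning on `X_0, …, X_{n-1}` simply integrates them out:
`E[X_J - X_I | X] = (S_n - S_k)/(n - k) - S_k/k = -(n/(k(n - k))) (S_k - (k/n) S_n)`.
-/

open MeasureTheory ProbabilityTheory

section UniformOn

variable {α E : Type*} [MeasurableSpace α] [MeasurableSingletonClass α] [NormedAddCommGroup E]

lemma integrableOn_count_finset (s : Finset α) (f : α → E) :
    IntegrableOn f s Measure.count := by
  rw [← Set.biUnion_of_singleton (s : Set α)]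
  simp only [Finset.mem_coe]
  exact integrableOn_finset_iUnion.2 fun x _ => integrableOn_singleton (hx := by simp)

lemma integrable_uniformOn_finset (s : Finset α) (f : α → E) :
    Integrable f (uniformOn (s : Set α)) := by
  rcases s.eq_empty_or_nonempty with rfl | hs
  · simp
  rw [uniformOn, ProbabilityTheory.cond]
  refine (integrableOn_count_finset s f).smul_measure ?_
  simp [Measure.count_apply_finset, hs.ne_empty]

variable [NormedSpace ℝ E] [CompleteSpace E]

lemma integral_uniformOn_finset (s : Finset α) (f : α → E) :
    ∫ x, f x ∂uniformOn (s : Set α) = (s.card : ℝ)⁻¹ • ∑ x ∈ s, f x := by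
  rw [uniformOn, ProbabilityTheory.cond, integral_smul_measure,
    setIntegral_finset s (integrableOn_count_finset s f)]
  simp [Measure.count_apply_finset, ENNReal.toReal_inv, Finset.smul_sum]

lemma integral_uniformOn_prod_sub {s t : Finset α} (hs : s.Nonempty) (ht : t.Nonempty)
    (x : α → E) :
    ∫ p, (x p.2 - x p.1) ∂(uniformOn (s : Set α)).prod (uniformOn (t : Set α))
      = (t.card : ℝ)⁻¹ • ∑ j ∈ t, x j - (s.card : ℝ)⁻¹ • ∑ i ∈ s, x i := by
  have := isProbabilityMeasure_uniformOn s.finite_toSet (Finset.coe_nonempty.2 hs)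
  have := isProbabilityMeasure_uniformOn t.finite_toSet (Finset.coe_nonempty.2 ht)
  rw [integral_sub ((integrable_uniformOn_finset t x).comp_snd _)
      ((integrable_uniformOn_finset s x).comp_fst _),
    integral_fun_snd, integral_fun_fst, integral_uniformOn_finset, integral_uniformOn_finset]
  simp

end UniformOn

theorem condExp_comap_fst_prod_ae_eq {Ω β E : Type*} {m mΩ : MeasurableSpace Ω}
    [MeasurableSpace β] [NormedAddCommGroup E] [NormedSpace ℝ E] [CompleteSpace E]
    {P : Measure Ω} [IsFiniteMeasure P] {ν : Measure β} [IsProbabilityMeasure ν]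
    (hm : m ≤ mΩ) {f : Ω × β → E} (hf : Integrable f (P.prod ν)) {g : Ω → E}
    (hg : StronglyMeasurable[m] g) (hfg : ∀ᵐ ω ∂P, ∫ b, f (ω, b) ∂ν = g ω) :
    (P.prod ν)[f | m.comap Prod.fst] =ᵐ[P.prod ν] fun x => g x.1 := by
  have hm' : m.comap Prod.fst ≤ (inferInstance : MeasurableSpace (Ω × β)) :=
    (MeasurableSpace.comap_mono hm).trans measurable_fst.comap_le
  have hg_int : Integrable (fun x : Ω × β => g x.1) (P.prod ν) :=
    (hf.integral_prod_left.congr hfg).comp_fst ν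
  refine (ae_eq_condExp_of_forall_setIntegral_eq hm' hf (fun _ _ _ => hg_int.integrableOn)
    ?_ (hg.comp_measurable (comap_measurable Prod.fst)).aestronglyMeasurable).symm
  rintro _ ⟨A, hA, rfl⟩ -
  have hA' : MeasurableSet A := hm A hA
  rw [← Set.prod_univ, setIntegral_prod _ hg_int.integrableOn, setIntegral_prod _ hf.integrableOn]
  refine setIntegral_congr_ae hA' (hfg.mono fun ω hω _ => ?_)
  simp [hω]

lemma ae_forall_mem_of_map_eq {ι Ω β : Type*} [Countable ι] [MeasurableSpace Ω]
    [MeasurableSpace β] {P : Measure Ω} {Y : ι → Ω → β} (hY : ∀ i, AEMeasurable (Y i) P)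
    {i₀ : ι} (hident : ∀ i, P.map (Y i) = P.map (Y i₀)) {t : Set β} (ht : MeasurableSet t)
    (h₀ : ∀ᵐ ω ∂P, Y i₀ ω ∈ t) : ∀ᵐ ω ∂P, ∀ i, Y i ω ∈ t :=
  ae_all_iff.2 fun i => (IdentDistrib.mk (hY i₀) (hY i) (hident i).symm).ae_mem_snd ht h₀

lemma integrable_prod_sub_of_ae_mem_Icc {Ω ι : Type*} [MeasurableSpace Ω] [MeasurableSpace ι]
    [Countable ι] [MeasurableSingletonClass ι] {P : Measure Ω} [IsFiniteMeasure P]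
    {ν : Measure (ι × ι)} [IsFiniteMeasure ν] {X : ι → Ω → ℝ} (hX : ∀ i, Measurable (X i))
    {a b : ℝ} (hab : ∀ᵐ ω ∂P, ∀ i, X i ω ∈ Set.Icc a b) :
    Integrable (fun z : Ω × ι × ι => X z.2.2 z.1 - X z.2.1 z.1) (P.prod ν) := by
  refine .of_bound (measurable_from_prod_countable_left fun p =>
    (hX p.2).sub (hX p.1)).aestronglyMeasurable (b - a) ?_
  filter_upwards [Measure.quasiMeasurePreserving_fst.ae hab] with z hz
  obtain ⟨hi₁, hi₂⟩ := hz z.2.1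
  obtain ⟨hj₁, hj₂⟩ := hz z.2.2
  rw [Real.norm_eq_abs, abs_le]
  constructor <;> linarith

/-- The paper's `W_k = S_k - (k/n) S_n`, with indices starting at `0`. -/
noncomputable def bridgeSum (x : ℕ → ℝ) (n k : ℕ) : ℝ :=
  ∑ i ∈ Finset.range k, x i - (k : ℝ) / n * ∑ i ∈ Finset.range n, x i

lemma integral_uniformOn_exchange_sub (x : ℕ → ℝ) {n k : ℕ} (hk : 1 ≤ k) (hkn : k < n) :
    ∫ p, (x p.2 - x p.1) ∂(uniformOn (Finset.range k : Set ℕ)).prod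
        (uniformOn (Finset.Ico k n : Set ℕ))
      = -((n : ℝ) / (k * (n - k))) * bridgeSum x n k := by
  have hk0 : (k : ℝ) ≠ 0 := Nat.cast_ne_zero.2 (by omega)
  have hn0 : (n : ℝ) ≠ 0 := Nat.cast_ne_zero.2 (by omega)
  have hnk : (n : ℝ) - k ≠ 0 := sub_ne_zero.2 (by exact_mod_cast hkn.ne')
  rw [integral_uniformOn_prod_sub (Finset.nonempty_range_iff.2 (by omega))
      (Finset.nonempty_Ico.2 hkn), Finset.sum_Ico_eq_sub _ hkn.le, Nat.card_Ico,
    Finset.card_range, Nat.cast_sub hkn.le, smul_eq_mul, smul_eq_mul, bridgeSum]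
  field_simp
  ring

theorem exchangeable_pair_conditional_linearity_general {Ω : Type*} [MeasurableSpace Ω]
    (P : Measure Ω) [IsProbabilityMeasure P]
    (R : ℝ) (Y : ℕ → Ω → ℝ)
    (hmeas : ∀ i, Measurable (Y i))
    (hident : ∀ i, P.map (Y i) = P.map (Y 0))
    (hbound : ∀ᵐ ω ∂P, Y 0 ω ∈ Set.Icc 0 R)
    (n k : ℕ) (hk : 1 ≤ k) (hkn : k < n) :
    (P.prod ((uniformOn (Set.Iio k)).prod (uniformOn (Set.Ico k n))))[
        (fun ω' : Ω × ℕ × ℕ =>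
          (Y ω'.2.2 ω'.1 - ∫ x, Y 0 x ∂P) - (Y ω'.2.1 ω'.1 - ∫ x, Y 0 x ∂P))
        | MeasurableSpace.comap
            (fun ω' : Ω × ℕ × ℕ => fun i : Fin n => Y (i : ℕ) ω'.1 - ∫ x, Y 0 x ∂P)
            inferInstance]
      =ᵐ[P.prod ((uniformOn (Set.Iio k)).prod (uniformOn (Set.Ico k n)))]
        fun ω' : Ω × ℕ × ℕ =>
          -((n : ℝ) / ((k : ℝ) * ((n : ℝ) - k)))
            * ((∑ i ∈ Finset.range k, (Y i ω'.1 - ∫ x, Y 0 x ∂P))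
                - (k : ℝ) / (n : ℝ) * ∑ i ∈ Finset.range n, (Y i ω'.1 - ∫ x, Y 0 x ∂P)) := by
  set c := ∫ x, Y 0 x ∂P
  set ψ : Ω → Fin n → ℝ := fun ω i => Y i ω - c
  have := isProbabilityMeasure_uniformOn (Set.finite_Iio k) ⟨0, Set.mem_Iio.2 hk⟩
  have := isProbabilityMeasure_uniformOn (Set.finite_Ico k n) ⟨k, le_rfl, hkn⟩
  have hψ : Measurable ψ := measurable_pi_lambda _ fun i => (hmeas i).sub measurable_const
  have hcoord : ∀ i ∈ Finset.range n, Measurable[MeasurableSpace.comap ψ inferInstance]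
      fun ω => Y i ω - c := fun i hi =>
    (measurable_pi_apply (⟨i, Finset.mem_range.1 hi⟩ : Fin n)).comp (comap_measurable ψ)
  have hY : ∀ᵐ ω ∂P, ∀ i, Y i ω ∈ Set.Icc 0 R :=
    ae_forall_mem_of_map_eq (fun i => (hmeas i).aemeasurable) hident measurableSet_Icc hbound
  rw [show MeasurableSpace.comap (fun ω' : Ω × ℕ × ℕ => fun i : Fin n => Y i ω'.1 - c)
      inferInstance = (MeasurableSpace.comap ψ inferInstance).comap Prod.fst from
    (MeasurableSpace.comap_comp (f := ψ) (g := Prod.fst)).symm]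
  refine condExp_comap_fst_prod_ae_eq
    (g := fun ω => -((n : ℝ) / (k * (n - k))) * bridgeSum (fun i => Y i ω - c) n k)
    hψ.comap_le ?_ ?_ (ae_of_all _ fun ω => ?_)
  · exact (integrable_prod_sub_of_ae_mem_Icc hmeas hY).congr
      (ae_of_all _ fun _ => (sub_sub_sub_cancel_right _ _ c).symm)
  · refine (measurable_const.mul ((Finset.measurable_sum _ fun i hi => hcoord i ?_).sub
      (measurable_const.mul (Finset.measurable_sum _ hcoord)))).stronglyMeasurable
    simp only [Finset.mem_range] at hi ⊢
    omega
  · rw [← Finset.coe_range, ← Finset.coe_Ico]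
    exact integral_uniformOn_exchange_sub (fun i => Y i ω - c) hk hkn

/-- **linearity of the exchangeable pair.** Under Assumption (R,σ), on the
extension `Ω × ℕ × ℕ` carrying `I ~ Uniform{1,…,k}` and `J ~ Uniform{k+1,…,n}`
(independent of each other and of the `X_i`), with `W'_k − W_k = X_J − X_I` one has
`E[W'_k − W_k | X_1,…,X_n] = −(n/(k(n−k))) W_k` almost surely. -/
theorem exchangeable_pair_conditional_linearity {Ω : Type*} [MeasurableSpace Ω]
    (P : Measure Ω) [IsProbabilityMeasure P]
    (R σ : ℝ) (hR : 0 < R) (hσ : 0 < σ) (Y : ℕ → Ω → ℝ)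
    (hmeas : ∀ i, Measurable (Y i))
    (hindep : iIndepFun Y P)
    (hident : ∀ i, P.map (Y i) = P.map (Y 0))
    (hbound : ∀ᵐ ω ∂P, Y 0 ω ∈ Set.Icc 0 R)
    (hvar : variance (Y 0) P = σ ^ 2)
    (n k : ℕ) (hk : 1 ≤ k) (hkn : k < n) :
    (P.prod ((uniformOn (Set.Iio k)).prod (uniformOn (Set.Ico k n))))[
        (fun ω' : Ω × ℕ × ℕ =>
          (Y ω'.2.2 ω'.1 - ∫ x, Y 0 x ∂P) - (Y ω'.2.1 ω'.1 - ∫ x, Y 0 x ∂P))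
        | MeasurableSpace.comap
            (fun ω' : Ω × ℕ × ℕ => fun i : Fin n => Y (i : ℕ) ω'.1 - ∫ x, Y 0 x ∂P)
            inferInstance]
      =ᵐ[P.prod ((uniformOn (Set.Iio k)).prod (uniformOn (Set.Ico k n)))]
        fun ω' : Ω × ℕ × ℕ =>
          -((n : ℝ) / ((k : ℝ) * ((n : ℝ) - k)))
            * ((∑ i ∈ Finset.range k, (Y i ω'.1 - ∫ x, Y 0 x ∂P))
                - (k : ℝ) / (n : ℝ) * ∑ i ∈ Finset.range n, (Y i ω'.1 - ∫ x, Y 0 x ∂P)) :=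
  exchangeable_pair_conditional_linearity_general P R Y hmeas hident hbound n k hk hkn
end

section
/- Let p ≥ 2 be a real number, let V be a real random variable with E|V|^p < ∞, and let Z ~ N(0,1) be independent of V. Then for every T > 0: ∫_0^T ‖ e^{−t} V − ( e^{−2t}/√(1 − e^{−2t}) ) Z ‖_{L^p} dt ≤ (1 − e^{−T}) · W_p(V, N(0,1)) + ‖Z‖_{L^p} · ( π/2 − arcsin(e^{−T}) ). -/
/-!
Fix `t > 0`, a coupling `(X, Y)` of the law of `V` with `N(0,1)`, and a standard Gaussian `Z'`
independent of `(X, Y)`; then `(X, Z')` has the law of `(V, Z)`. With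
`c = e^{-2t}/√(1-e^{-2t})`, split `e^{-t} X - c Z' = e^{-t} (X - Y) + (e^{-t} Y - c Z')`: the
second summand is centred Gaussian with variance `e^{-2t} + c² = e^{-2t}/(1-e^{-2t})`. Minkowski's
inequality and an infimum over couplings bound the integrand by
`e^{-t} W_p + e^{-t}/√(1-e^{-2t}) ‖Z‖_p`, and `-arcsin e^{-t}` is an antiderivative of
`e^{-t}/√(1-e^{-2t})` on `(0, T]`.
-/

open MeasureTheory ProbabilityTheory Set
open scoped ENNReal

/-- The Wasserstein-`p` distance between two Borel probability measures on `ℝ`,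
defined as an infimum over couplings (valued in `ℝ≥0∞`). -/
noncomputable def Wp (p : ℝ) (μ ν : Measure ℝ) : ℝ≥0∞ :=
  ⨅ γ ∈ {γ : Measure (ℝ × ℝ) | γ.map Prod.fst = μ ∧ γ.map Prod.snd = ν},
    (∫⁻ z, ENNReal.ofReal (|z.1 - z.2| ^ p) ∂γ) ^ (1 / p)

lemma exp_neg_sq (t : ℝ) : Real.exp (-t) ^ 2 = Real.exp (-2 * t) := by
  rw [← Real.exp_nat_mul]
  ring_nf

lemma eLpNorm_sub_eq_transportCost {p : ℝ} (hp : 0 < p) (γ : Measure (ℝ × ℝ)) :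
    eLpNorm (fun z : ℝ × ℝ => z.1 - z.2) (ENNReal.ofReal p) γ
      = (∫⁻ z, ENNReal.ofReal (|z.1 - z.2| ^ p) ∂γ) ^ (1 / p) := by
  rw [eLpNorm_eq_lintegral_rpow_enorm_toReal (by simpa using hp) ENNReal.ofReal_ne_top,
    ENNReal.toReal_ofReal hp.le]
  simp_rw [Real.enorm_eq_ofReal_abs, ENNReal.ofReal_rpow_of_nonneg (abs_nonneg _) hp.le]

lemma le_mul_Wp_add {p : ℝ} {μ ν : Measure ℝ} {x k B : ℝ≥0∞} (hk₀ : k ≠ 0) (hk : k ≠ ∞)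
    (h : ∀ γ : Measure (ℝ × ℝ), γ.map Prod.fst = μ → γ.map Prod.snd = ν →
      x ≤ k * (∫⁻ z, ENNReal.ofReal (|z.1 - z.2| ^ p) ∂γ) ^ (1 / p) + B) :
    x ≤ k * Wp p μ ν + B := by
  simp_rw [Wp, ENNReal.mul_iInf_of_ne hk₀ hk, ENNReal.iInf_add]
  exact le_iInf₂ fun γ hγ => h γ hγ.1 hγ.2

lemma map_linearComb_gaussianReal_prod (a c : ℝ) :
    ((gaussianReal 0 1).prod (gaussianReal 0 1)).map (fun z : ℝ × ℝ => a * z.1 + c * z.2)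
      = (gaussianReal 0 1).map (fun x => √(a ^ 2 + c ^ 2) * x) := by
  have hsplit : (fun z : ℝ × ℝ => a * z.1 + c * z.2)
      = (fun z : ℝ × ℝ => z.1 + z.2) ∘ Prod.map (a * ·) (c * ·) := rfl
  rw [hsplit, ← Measure.map_map (by fun_prop) (by fun_prop),
    ← Measure.map_prod_map _ _ (by fun_prop) (by fun_prop), ← Measure.conv,
    gaussianReal_map_const_mul, gaussianReal_map_const_mul, gaussianReal_map_const_mul,
    gaussianReal_conv_gaussianReal]
  congr 1
  · ring
  · ext
    simp [Real.sq_sqrt (by positivity : 0 ≤ a ^ 2 + c ^ 2)]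

lemma eLpNorm_linearComb_gaussianReal_prod (a c : ℝ) (q : ℝ≥0∞) :
    eLpNorm (fun z : ℝ × ℝ => a * z.1 + c * z.2) q ((gaussianReal 0 1).prod (gaussianReal 0 1))
      = ENNReal.ofReal √(a ^ 2 + c ^ 2) * eLpNorm id q (gaussianReal 0 1) := by
  rw [← Real.enorm_eq_ofReal (Real.sqrt_nonneg _), ← eLpNorm_const_smul,
    ← Function.id_comp (fun z : ℝ × ℝ => a * z.1 + c * z.2),
    ← eLpNorm_map_measure (by fun_prop) (by fun_prop), map_linearComb_gaussianReal_prod,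
    eLpNorm_map_measure (by fun_prop) (by fun_prop)]
  rfl

section Coupling

variable {Ω : Type*} [MeasurableSpace Ω] {P : Measure Ω} {V Z : Ω → ℝ}

lemma eLpNorm_comp_eq_of_indepFun_of_coupling [IsFiniteMeasure P]
    (hV : Measurable V) (hZ : Measurable Z) (hindep : IndepFun V Z P)
    {γ : Measure (ℝ × ℝ)} [SFinite γ] (hγ : γ.map Prod.fst = P.map V)
    {g : ℝ × ℝ → ℝ} (hg : Measurable g) (q : ℝ≥0∞) :
    eLpNorm (fun ω => g (V ω, Z ω)) q P
      = eLpNorm (fun w : (ℝ × ℝ) × ℝ => g (w.1.1, w.2)) q (γ.prod (P.map Z)) := by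
  have hlaw : (γ.prod (P.map Z)).map (fun w => (w.1.1, w.2)) = P.map (fun ω => (V ω, Z ω)) := by
    rw [(indepFun_iff_map_prod_eq_prod_map_map hV.aemeasurable hZ.aemeasurable).1 hindep, ← hγ,
      ← Measure.map_id (μ := P.map Z), Measure.map_prod_map _ _ measurable_fst measurable_id,
      Measure.map_id]
    rfl
  rw [← Function.comp_def g, ← eLpNorm_map_measure (by fun_prop) (by fun_prop), ← hlaw,
    eLpNorm_map_measure (by fun_prop) (by fun_prop)]
  rfl

lemma eLpNorm_mul_sub_mul_le_of_coupling [IsProbabilityMeasure P]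
    (hV : Measurable V) (hZ : Measurable Z)
    (hZlaw : P.map Z = gaussianReal 0 1) (hindep : IndepFun V Z P)
    {q : ℝ≥0∞} (hq : 1 ≤ q) {a : ℝ} (ha : 0 ≤ a) (c : ℝ) {γ : Measure (ℝ × ℝ)}
    (hγ₁ : γ.map Prod.fst = P.map V) (hγ₂ : γ.map Prod.snd = gaussianReal 0 1) :
    eLpNorm (fun ω => a * V ω - c * Z ω) q P
      ≤ ENNReal.ofReal a * eLpNorm (fun z : ℝ × ℝ => z.1 - z.2) q γ
        + ENNReal.ofReal √(a ^ 2 + c ^ 2) * eLpNorm Z q P := by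
  have : IsProbabilityMeasure (γ.map Prod.fst) :=
    hγ₁ ▸ Measure.isProbabilityMeasure_map hV.aemeasurable
  have : IsProbabilityMeasure γ := Measure.isProbabilityMeasure_of_map Prod.fst
  set μ := γ.prod (gaussianReal 0 1)
  have hsplit : (fun w : (ℝ × ℝ) × ℝ => a * w.1.1 - c * w.2)
      = a • (fun w : (ℝ × ℝ) × ℝ => w.1.1 - w.1.2)
        + (fun z : ℝ × ℝ => a * z.1 + -c * z.2) ∘ (fun w => (w.1.2, w.2)) := by
    funext w; simp only [Pi.add_apply, Pi.smul_apply, Function.comp_apply, smul_eq_mul]; ring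
  have hcost : eLpNorm (fun w : (ℝ × ℝ) × ℝ => w.1.1 - w.1.2) q μ
      = eLpNorm (fun z : ℝ × ℝ => z.1 - z.2) q γ := by
    have hfst : μ.map Prod.fst = γ := by rw [Measure.map_fst_prod, measure_univ, one_smul]
    rw [← Function.comp_def (fun z : ℝ × ℝ => z.1 - z.2) Prod.fst,
      ← eLpNorm_map_measure (by fun_prop) (by fun_prop), hfst]
  have hgauss : μ.map (fun w => (w.1.2, w.2)) = (gaussianReal 0 1).prod (gaussianReal 0 1) := by
    rw [show (fun w : (ℝ × ℝ) × ℝ => (w.1.2, w.2)) = Prod.map Prod.snd id from rfl,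
      ← Measure.map_prod_map _ _ measurable_snd measurable_id, hγ₂, Measure.map_id]
  have hZnorm : eLpNorm id q (gaussianReal 0 1) = eLpNorm Z q P := by
    rw [← hZlaw, eLpNorm_map_measure (by fun_prop) hZ.aemeasurable]
    rfl
  calc eLpNorm (fun ω => a * V ω - c * Z ω) q P
      = eLpNorm (fun w : (ℝ × ℝ) × ℝ => a * w.1.1 - c * w.2) q μ := by
        rw [eLpNorm_comp_eq_of_indepFun_of_coupling (g := fun z : ℝ × ℝ => a * z.1 - c * z.2)
          hV hZ hindep hγ₁ (by fun_prop), hZlaw]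
    _ ≤ eLpNorm (a • fun w : (ℝ × ℝ) × ℝ => w.1.1 - w.1.2) q μ
        + eLpNorm ((fun z : ℝ × ℝ => a * z.1 + -c * z.2) ∘ (fun w => (w.1.2, w.2))) q μ := by
        rw [hsplit]
        exact eLpNorm_add_le (by fun_prop) (by fun_prop) hq
    _ = _ := by
        rw [eLpNorm_const_smul, Real.enorm_eq_ofReal ha, hcost,
          ← eLpNorm_map_measure (by fun_prop) (by fun_prop), hgauss,
          eLpNorm_linearComb_gaussianReal_prod, neg_sq, hZnorm]

lemma eLpNorm_mul_sub_mul_le_Wp [IsProbabilityMeasure P] (hV : Measurable V) (hZ : Measurable Z)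
    (hZlaw : P.map Z = gaussianReal 0 1) (hindep : IndepFun V Z P)
    {p : ℝ} (hp : 1 ≤ p) {a : ℝ} (ha : 0 < a) (c : ℝ) :
    eLpNorm (fun ω => a * V ω - c * Z ω) (ENNReal.ofReal p) P
      ≤ ENNReal.ofReal a * Wp p (P.map V) (gaussianReal 0 1)
        + ENNReal.ofReal √(a ^ 2 + c ^ 2) * eLpNorm Z (ENNReal.ofReal p) P := by
  refine le_mul_Wp_add (by simpa using ha) ENNReal.ofReal_ne_top fun γ hγ₁ hγ₂ => ?_
  rw [← eLpNorm_sub_eq_transportCost (by linarith)]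
  exact eLpNorm_mul_sub_mul_le_of_coupling hV hZ hZlaw hindep (ENNReal.one_le_ofReal.2 hp)
    ha.le c hγ₁ hγ₂

end Coupling

lemma lintegral_Ioc_ofReal_eq_sub_of_hasDerivAt {F f : ℝ → ℝ} {a b : ℝ} (hab : a ≤ b)
    (hF : ContinuousOn F (Icc a b)) (hderiv : ∀ x ∈ Ioo a b, HasDerivAt F (f x) x)
    (hf : ∀ x ∈ Ioo a b, 0 ≤ f x) :
    ∫⁻ x in Ioc a b, ENNReal.ofReal (f x) = ENNReal.ofReal (F b - F a) := by
  have hint := intervalIntegral.integrableOn_deriv_of_nonneg hF hderiv hf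
  have hnonneg : 0 ≤ᵐ[volume.restrict (Ioc a b)] f := by
    rw [← Measure.restrict_congr_set Ioo_ae_eq_Ioc]
    exact ae_restrict_of_forall_mem measurableSet_Ioo hf
  rw [← ofReal_integral_eq_lintegral_ofReal hint hnonneg, ← intervalIntegral.integral_of_le hab,
    intervalIntegral.integral_eq_sub_of_hasDerivAt_of_le hab hF hderiv
      ((intervalIntegrable_iff_integrableOn_Ioc_of_le hab).2 hint)]

lemma lintegral_Ioc_exp_neg (T : ℝ) :
    ∫⁻ t in Ioc 0 T, ENNReal.ofReal (Real.exp (-t)) = ENNReal.ofReal (1 - Real.exp (-T)) := by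
  rcases le_total T 0 with hT | hT
  · rw [Ioc_eq_empty (not_lt.2 hT), Measure.restrict_empty, lintegral_zero_measure, eq_comm,
      ENNReal.ofReal_eq_zero, sub_nonpos, Real.one_le_exp_iff]
    linarith
  · have hderiv (t : ℝ) : HasDerivAt (fun u : ℝ => -Real.exp (-u)) (Real.exp (-t)) t := by
      simpa using (hasDerivAt_neg t).exp.fun_neg
    rw [lintegral_Ioc_ofReal_eq_sub_of_hasDerivAt hT (by fun_prop) (fun t _ => hderiv t)
      (fun t _ => (Real.exp_pos _).le), neg_zero, Real.exp_zero, sub_neg_eq_add, neg_add_eq_sub]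

lemma hasDerivAt_neg_arcsin_exp_neg {t : ℝ} (ht : 0 < t) :
    HasDerivAt (fun u : ℝ => -Real.arcsin (Real.exp (-u)))
      (Real.exp (-t) / √(1 - Real.exp (-2 * t))) t := by
  have hlt : Real.exp (-t) < 1 := Real.exp_lt_one_iff.2 (by linarith)
  refine (((Real.hasDerivAt_arcsin (by linarith [Real.exp_pos (-t)]) hlt.ne).comp t
    (hasDerivAt_neg t).exp).fun_neg).congr_deriv ?_
  rw [exp_neg_sq]
  ring

lemma lintegral_Ioc_exp_neg_div_sqrt (T : ℝ) :
    ∫⁻ t in Ioc 0 T, ENNReal.ofReal (Real.exp (-t) / √(1 - Real.exp (-2 * t)))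
      = ENNReal.ofReal (Real.pi / 2 - Real.arcsin (Real.exp (-T))) := by
  rcases le_total T 0 with hT | hT
  · rw [Ioc_eq_empty (not_lt.2 hT), Measure.restrict_empty, lintegral_zero_measure,
      Real.arcsin_of_one_le (Real.one_le_exp_iff.2 (by linarith)), sub_self, ENNReal.ofReal_zero]
  · rw [lintegral_Ioc_ofReal_eq_sub_of_hasDerivAt hT (by fun_prop)
      (fun t ht => hasDerivAt_neg_arcsin_exp_neg ht.1) (fun t _ => by positivity),
      neg_zero, Real.exp_zero, Real.arcsin_one, sub_neg_eq_add, neg_add_eq_sub]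

lemma sqrt_exp_neg_sq_add_sq {t : ℝ} (ht : 0 < t) :
    √(Real.exp (-t) ^ 2 + (Real.exp (-2 * t) / √(1 - Real.exp (-2 * t))) ^ 2)
      = Real.exp (-t) / √(1 - Real.exp (-2 * t)) := by
  have hlt : Real.exp (-2 * t) < 1 := Real.exp_lt_one_iff.2 (by linarith)
  have hpos : 0 < 1 - Real.exp (-2 * t) := by linarith
  rw [← Real.sqrt_sq (by positivity : 0 ≤ Real.exp (-t) / √(1 - Real.exp (-2 * t)))]
  congr 1
  rw [div_pow, div_pow, Real.sq_sqrt hpos.le, exp_neg_sq, eq_div_iff hpos.ne', add_mul,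
    div_mul_cancel₀ _ hpos.ne']
  ring

theorem ou_interpolation_initial_segment_bound_general {Ω : Type*} [MeasurableSpace Ω]
    (P : Measure Ω) [IsProbabilityMeasure P]
    (p : ℝ) (hp : 2 ≤ p) (V Z : Ω → ℝ)
    (hV : Measurable V) (hZ : Measurable Z)
    (hZlaw : P.map Z = gaussianReal 0 1)
    (hindep : IndepFun V Z P)
    (T : ℝ) :
    (∫⁻ t in Set.Ioc 0 T,
        eLpNorm (fun ω => Real.exp (-t) * V ω
            - Real.exp (-2 * t) / Real.sqrt (1 - Real.exp (-2 * t)) * Z ω)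
          (ENNReal.ofReal p) P)
      ≤ ENNReal.ofReal (1 - Real.exp (-T)) * Wp p (P.map V) (gaussianReal 0 1)
        + eLpNorm Z (ENNReal.ofReal p) P
            * ENNReal.ofReal (Real.pi / 2 - Real.arcsin (Real.exp (-T))) := by
  set W := Wp p (P.map V) (gaussianReal 0 1)
  set D := eLpNorm Z (ENNReal.ofReal p) P
  have hpointwise : ∀ t ∈ Ioc 0 T,
      eLpNorm (fun ω => Real.exp (-t) * V ω
          - Real.exp (-2 * t) / √(1 - Real.exp (-2 * t)) * Z ω) (ENNReal.ofReal p) P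
        ≤ ENNReal.ofReal (Real.exp (-t)) * W
          + ENNReal.ofReal (Real.exp (-t) / √(1 - Real.exp (-2 * t))) * D := fun t ht => by
    simpa only [sqrt_exp_neg_sq_add_sq ht.1] using
      eLpNorm_mul_sub_mul_le_Wp hV hZ hZlaw hindep (by linarith) (Real.exp_pos (-t))
        (Real.exp (-2 * t) / √(1 - Real.exp (-2 * t)))
  calc _ ≤ ∫⁻ t in Ioc 0 T, (ENNReal.ofReal (Real.exp (-t)) * W
          + ENNReal.ofReal (Real.exp (-t) / √(1 - Real.exp (-2 * t))) * D) :=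
        setLIntegral_mono (by fun_prop) hpointwise
    _ = _ := by
        rw [lintegral_add_left (by fun_prop), lintegral_mul_const _ (by fun_prop),
          lintegral_mul_const _ (by fun_prop), lintegral_Ioc_exp_neg,
          lintegral_Ioc_exp_neg_div_sqrt, mul_comm D]

/-- For `V ∈ L^p` and `Z ~ N(0,1)` independent of `V`, and any `T > 0`,
`∫₀^T ‖e^{−t} V − (e^{−2t}/√(1−e^{−2t})) Z‖_p dt
  ≤ (1 − e^{−T}) W_p(V, N(0,1)) + ‖Z‖_p (π/2 − arcsin(e^{−T}))`. -/
theorem ou_interpolation_initial_segment_bound {Ω : Type*} [MeasurableSpace Ω]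
    (P : Measure Ω) [IsProbabilityMeasure P]
    (p : ℝ) (hp : 2 ≤ p) (V Z : Ω → ℝ)
    (hV : Measurable V) (hZ : Measurable Z)
    (hVp : MemLp V (ENNReal.ofReal p) P)
    (hZlaw : P.map Z = gaussianReal 0 1)
    (hindep : IndepFun V Z P)
    (T : ℝ) (hT : 0 < T) :
    (∫⁻ t in Set.Ioc 0 T,
        eLpNorm (fun ω => Real.exp (-t) * V ω
            - Real.exp (-2 * t) / Real.sqrt (1 - Real.exp (-2 * t)) * Z ω)
          (ENNReal.ofReal p) P)
      ≤ ENNReal.ofReal (1 - Real.exp (-T)) * Wp p (P.map V) (gaussianReal 0 1)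
        + eLpNorm Z (ENNReal.ofReal p) P
            * ENNReal.ofReal (Real.pi / 2 - Real.arcsin (Real.exp (-T))) :=
  ou_interpolation_initial_segment_bound_general P p hp V Z hV hZ hZlaw hindep T
end

section
/- Suppose Assumption (R,σ) holds. Then for all integers 1 ≤ k < n and all reals p ≥ 2, with σ_{n,k}² := σ² k(n−k)/n: ( E[ W_p( ν_{(X_1,…,X_n),k}, N(0, σ_{n,k}²) )^p ] )^{1/p} ≤ √(p−1) · σ_{n,k} · (1 + √2 · R/σ). In particular, W_p( W_k, N(0, σ_{n,k}²) ) ≤ √(p−1) · σ_{n,k} · (1 + √2 · R/σ). -/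
/-
For each permutation `τ`, the statistic `permStat n k x τ` is the weighted sum
`∑ᵢ (1[i < k] - k/n) x_{τ i}` with `∑ᵢ (1[i < k] - k/n)² = k(n-k)/n`. Applied to the centred
independent variables `Y_{τ i} - E Y`, Hoeffding's lemma makes it sub-Gaussian with parameter
`k(n-k)/n · (R/2)²`, and `N(0, σ_{n,k}²)` is sub-Gaussian with parameter `σ_{n,k}²`. A
sub-Gaussian variable with parameter `c` has `E|X|^p ≤ (2(p-1)c)^{p/2}` for `p ≥ 2` (integrate
`|x|^p ≤ (p/(te))^p (e^{tx} + e^{-tx})` at `t = √(p/c)`). Coupling independently gives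
`W_p(μ, ν) ≤ ‖μ‖_p + ‖ν‖_p`; averaging over `τ` and Minkowski's inequality in `ω` bound the
conditional version, and `σ ≤ R/2` (a `[0, R]`-valued variable has variance at most `R²/4`)
turns `√(2(p-1)) (R/2 + σ) σ_{n,k}/σ` into the stated constant.
-/

open MeasureTheory ProbabilityTheory
open scoped ENNReal

noncomputable instance {n : ℕ} : MeasurableSpace (Equiv.Perm (Fin n)) := ⊤

/-- `Σ_{i=1}^k x_{π(i)} − (k/n) Σ_{i=1}^n x_i` as a function of the permutation `π`. -/
noncomputable def permStat (n k : ℕ) (x : Fin n → ℝ) (π : Equiv.Perm (Fin n)) : ℝ :=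
  (∑ i : Fin n, if (i : ℕ) < k then x (π i) else 0) - ((k : ℝ) / n) * ∑ i, x i

/-- `ν_{x,k}`: the law of `Σ_{i=1}^k x_{π(i)} − (k/n) Σ_{i=1}^n x_i` for a uniformly
random permutation `π` of `{1,…,n}`. -/
noncomputable def permLaw (n k : ℕ) (x : Fin n → ℝ) : Measure ℝ :=
  (uniformOn (Set.univ : Set (Equiv.Perm (Fin n)))).map (permStat n k x)

open Real
open scoped NNReal

lemma rpow_le_mul_exp {p y : ℝ} (hp : 0 < p) (hy : 0 ≤ y) :
    y ^ p ≤ (p / exp 1) ^ p * exp y := by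
  rcases hy.eq_or_lt with rfl | hy
  · rw [zero_rpow hp.ne']
    positivity
  have hlog : log (y / p) ≤ y / p - 1 := log_le_sub_one_of_pos (by positivity)
  rw [log_div hy.ne' hp.ne'] at hlog
  rw [rpow_def_of_pos hy, rpow_def_of_pos (by positivity), ← exp_add, exp_le_exp,
    log_div hp.ne' (exp_ne_zero 1), log_exp]
  have := mul_le_mul_of_nonneg_left hlog hp.le
  field_simp at this
  linarith

lemma abs_rpow_le_mul_exp_add_exp {p t : ℝ} (hp : 0 < p) (ht : 0 < t) (x : ℝ) :
    |x| ^ p ≤ (p / (t * exp 1)) ^ p * (exp (t * x) + exp (-t * x)) := by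
  have hscale : (t * |x|) ^ p ≤ (p / exp 1) ^ p * exp (t * |x|) :=
    rpow_le_mul_exp hp (by positivity)
  have habs : exp (t * |x|) ≤ exp (t * x) + exp (-t * x) := by
    rcases abs_cases x with ⟨h, _⟩ | ⟨h, _⟩ <;> rw [h]
    · linarith [exp_pos (-t * x)]
    · rw [mul_neg, ← neg_mul]; linarith [exp_pos (t * x)]
  rw [mul_rpow ht.le (abs_nonneg x)] at hscale
  rw [mul_comm t, ← div_div, div_rpow (by positivity) ht.le, div_mul_eq_mul_div,
    le_div_iff₀ (by positivity), mul_comm]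
  calc _ ≤ (p / exp 1) ^ p * exp (t * |x|) := hscale
    _ ≤ _ := by gcongr

/-- `t = √(p / c)` minimises the right-hand side of
`HasSubgaussianMGF.lintegral_abs_rpow_le_mul_exp`. -/
lemma rpow_mul_exp_eq_of_eq_sqrt {p c t : ℝ} (hp : 0 < p) (hc : 0 < c) (ht : t = √(p / c)) :
    (p / (t * exp 1)) ^ p * exp (c * t ^ 2 / 2) = (p * c / exp 1) ^ (p / 2) := by
  have ht2 : t ^ 2 = p / c := by rw [ht, sq_sqrt (by positivity)]
  have htpos : 0 < t := by rw [ht]; positivity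
  have hsq : (p / (t * exp 1)) ^ p = ((p / (t * exp 1)) ^ 2) ^ (p / 2) := by
    rw [← rpow_natCast, ← rpow_mul (by positivity)]; norm_num; ring_nf
  have hexp : exp (c * t ^ 2 / 2) = exp 1 ^ (p / 2) := by
    rw [exp_one_rpow, ht2]; congr 1; field_simp
  rw [hsq, hexp, ← mul_rpow (by positivity) (by positivity)]
  congr 1
  rw [div_pow, mul_pow, ht2]
  field_simp

namespace ProbabilityTheory.HasSubgaussianMGF

variable {Ω : Type*} [MeasurableSpace Ω] {μ : Measure Ω} {X : Ω → ℝ} {c : ℝ≥0}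

lemma mono {c' : ℝ≥0} (h : HasSubgaussianMGF X c μ) (hc : c ≤ c') :
    HasSubgaussianMGF X c' μ where
  integrable_exp_mul := h.integrable_exp_mul
  mgf_le t := (h.mgf_le t).trans (exp_le_exp.2 (by gcongr))

lemma lintegral_abs_rpow_le_mul_exp (h : HasSubgaussianMGF X c μ) {p t : ℝ} (hp : 0 < p)
    (ht : 0 < t) :
    ∫⁻ ω, ENNReal.ofReal (|X ω| ^ p) ∂μ
      ≤ ENNReal.ofReal (2 * ((p / (t * exp 1)) ^ p * exp (c * t ^ 2 / 2))) := by
  set K := (p / (t * exp 1)) ^ p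
  have hint : Integrable (fun ω ↦ K * (exp (t * X ω) + exp (-t * X ω))) μ :=
    ((h.integrable_exp_mul t).add (h.integrable_exp_mul (-t))).const_mul K
  calc ∫⁻ ω, ENNReal.ofReal (|X ω| ^ p) ∂μ
      ≤ ∫⁻ ω, ENNReal.ofReal (K * (exp (t * X ω) + exp (-t * X ω))) ∂μ :=
        lintegral_mono fun ω ↦ ENNReal.ofReal_le_ofReal (abs_rpow_le_mul_exp_add_exp hp ht _)
    _ = ENNReal.ofReal (K * (mgf X μ t + mgf X μ (-t))) := by
        rw [← ofReal_integral_eq_lintegral_ofReal hint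
            (ae_of_all μ fun ω ↦ by dsimp only; positivity),
          integral_const_mul, integral_add (h.integrable_exp_mul t) (h.integrable_exp_mul (-t))]
        rfl
    _ ≤ _ := by
        have hmgf : mgf X μ t + mgf X μ (-t) ≤ 2 * exp (c * t ^ 2 / 2) := by
          have hneg := h.mgf_le (-t)
          rw [neg_sq] at hneg
          linarith [h.mgf_le t]
        exact ENNReal.ofReal_le_ofReal
          ((mul_le_mul_of_nonneg_left hmgf (by positivity)).trans_eq (by ring))

lemma lintegral_abs_rpow_le (h : HasSubgaussianMGF X c μ) {p : ℝ} (hp : 0 < p) :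
    ∫⁻ ω, ENNReal.ofReal (|X ω| ^ p) ∂μ ≤ ENNReal.ofReal (2 * (p * c / exp 1) ^ (p / 2)) := by
  rcases eq_zero_or_pos c with rfl | hc
  · have hzero : (fun ω ↦ ENNReal.ofReal (|X ω| ^ p)) =ᵐ[μ] 0 :=
      h.ae_eq_zero_of_hasSubgaussianMGF_zero.mono fun ω hω ↦ by simp [hω, zero_rpow hp.ne']
    simp [lintegral_congr_ae hzero]
  rw [← rpow_mul_exp_eq_of_eq_sqrt hp (NNReal.coe_pos.2 hc) rfl]
  exact h.lintegral_abs_rpow_le_mul_exp hp (by positivity)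

lemma lintegral_abs_rpow_le_of_two_le (h : HasSubgaussianMGF X c μ) {p : ℝ} (hp : 2 ≤ p) :
    ∫⁻ ω, ENNReal.ofReal (|X ω| ^ p) ∂μ ≤ ENNReal.ofReal √(2 * (p - 1) * c) ^ p := by
  have hp0 : 0 < p := by linarith
  have hc : 0 ≤ 2 * (p - 1) * c := mul_nonneg (by linarith) c.2
  refine (h.lintegral_abs_rpow_le hp0).trans ?_
  rw [ENNReal.ofReal_rpow_of_nonneg (sqrt_nonneg _) hp0.le, sqrt_eq_rpow, ← rpow_mul hc,
    one_div_mul_eq_div, mul_assoc,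
    mul_rpow (x := 2) (y := (p - 1) * c) zero_le_two (mul_nonneg (by linarith) c.2)]
  gcongr
  · calc (2 : ℝ) = 2 ^ (1 : ℝ) := (rpow_one 2).symm
      _ ≤ 2 ^ (p / 2) := rpow_le_rpow_of_exponent_le (by norm_num) (by linarith)
  · rw [div_eq_mul_inv, mul_right_comm]
    gcongr
    have := add_one_le_exp 1
    rw [← div_eq_mul_inv, div_le_iff₀ (exp_pos 1)]
    nlinarith

end ProbabilityTheory.HasSubgaussianMGF

lemma hasSubgaussianMGF_gaussianReal (v : ℝ≥0) :
    HasSubgaussianMGF (fun x ↦ x) v (gaussianReal 0 v) where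
  integrable_exp_mul := integrable_exp_mul_gaussianReal
  mgf_le t := by simp [mgf_fun_id_gaussianReal]

lemma hasSubgaussianMGF_sum_mul_sub {Ω ι : Type*} [MeasurableSpace Ω] {μ : Measure Ω}
    [IsProbabilityMeasure μ] {Y : ι → Ω → ℝ} (hindep : iIndepFun Y μ)
    (hmeas : ∀ i, AEMeasurable (Y i) μ) {a b m : ℝ} (hY : ∀ i, ∀ᵐ ω ∂μ, Y i ω ∈ Set.Icc a b)
    (hmean : ∀ i, μ[Y i] = m) (w : ι → ℝ) (s : Finset ι) :
    HasSubgaussianMGF (fun ω ↦ ∑ i ∈ s, w i * (Y i ω - m))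
      (Real.toNNReal ((∑ i ∈ s, w i ^ 2) * ((b - a) / 2) ^ 2)) μ := by
  have hterm := fun i ↦ (hasSubgaussianMGF_of_mem_Icc (hmeas i) (hY i)).const_mul (w i)
  simp only [hmean] at hterm
  have hindep' : iIndepFun (fun i ω ↦ w i * (Y i ω - m)) μ :=
    hindep.comp (fun i y ↦ w i * (y - m)) fun i ↦ by fun_prop
  refine (HasSubgaussianMGF.sum_of_iIndepFun hindep' fun i _ ↦ hterm i).mono (le_of_eq ?_)
  rw [← NNReal.coe_inj, Real.coe_toNNReal _ (by positivity), Finset.sum_mul, NNReal.coe_sum]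
  refine Finset.sum_congr rfl fun i _ ↦ ?_
  change w i ^ 2 * ((‖b - a‖₊ : ℝ) / 2) ^ 2 = _
  rw [coe_nnnorm, norm_eq_abs, div_pow, div_pow, sq_abs]

section Wasserstein

variable {p : ℝ}

lemma Wp_le_add {μ ν : Measure ℝ} [IsProbabilityMeasure μ] [IsProbabilityMeasure ν] (hp : 1 ≤ p) :
    Wp p μ ν ≤ (∫⁻ x, ENNReal.ofReal (|x| ^ p) ∂μ) ^ (1 / p)
      + (∫⁻ x, ENNReal.ofReal (|x| ^ p) ∂ν) ^ (1 / p) := by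
  have hp0 : 0 < p := by linarith
  have hcoupling : (μ.prod ν).map Prod.fst = μ ∧ (μ.prod ν).map Prod.snd = ν := by simp
  have hofReal (x : ℝ) : ENNReal.ofReal (|x| ^ p) = ENNReal.ofReal |x| ^ p :=
    (ENNReal.ofReal_rpow_of_nonneg (abs_nonneg x) hp0.le).symm
  have hmeas : Measurable fun x : ℝ ↦ ENNReal.ofReal (|x| ^ p) := by fun_prop
  unfold Wp
  refine (iInf₂_le (μ.prod ν) hcoupling).trans ?_
  calc (∫⁻ z, ENNReal.ofReal (|z.1 - z.2| ^ p) ∂μ.prod ν) ^ (1 / p)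
      ≤ (∫⁻ z, ((fun z : ℝ × ℝ ↦ ENNReal.ofReal |z.1|) + fun z : ℝ × ℝ ↦ ENNReal.ofReal |z.2|) z ^ p
          ∂μ.prod ν) ^ (1 / p) := by
        gcongr with z
        rw [hofReal, Pi.add_apply, ← ENNReal.ofReal_add (abs_nonneg _) (abs_nonneg _)]
        gcongr
        exact abs_sub _ _
    _ ≤ (∫⁻ z, ENNReal.ofReal |z.1| ^ p ∂μ.prod ν) ^ (1 / p)
        + (∫⁻ z, ENNReal.ofReal |z.2| ^ p ∂μ.prod ν) ^ (1 / p) :=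
        ENNReal.lintegral_Lp_add_le (by fun_prop) (by fun_prop) hp
    _ = _ := by
        simp_rw [← hofReal]
        nth_rw 3 [← hcoupling.1]
        nth_rw 4 [← hcoupling.2]
        rw [lintegral_map hmeas measurable_fst, lintegral_map hmeas measurable_snd]

lemma lintegral_Wp_rpow_le {Ω : Type*} [MeasurableSpace Ω] {P : Measure Ω}
    [IsProbabilityMeasure P] {μ : Ω → Measure ℝ} [∀ ω, IsProbabilityMeasure (μ ω)]
    {ν : Measure ℝ} [IsProbabilityMeasure ν] (hp : 1 ≤ p)
    (hμ : AEMeasurable (fun ω ↦ ∫⁻ x, ENNReal.ofReal (|x| ^ p) ∂μ ω) P) :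
    (∫⁻ ω, Wp p (μ ω) ν ^ p ∂P) ^ (1 / p)
      ≤ (∫⁻ ω, ∫⁻ x, ENNReal.ofReal (|x| ^ p) ∂μ ω ∂P) ^ (1 / p)
        + (∫⁻ x, ENNReal.ofReal (|x| ^ p) ∂ν) ^ (1 / p) := by
  have hp0 : 0 < p := by linarith
  set M := fun ω ↦ ∫⁻ x, ENNReal.ofReal (|x| ^ p) ∂μ ω
  set N := ∫⁻ x, ENNReal.ofReal (|x| ^ p) ∂ν
  calc (∫⁻ ω, Wp p (μ ω) ν ^ p ∂P) ^ (1 / p)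
      ≤ (∫⁻ ω, ((fun ω ↦ M ω ^ (1 / p)) + fun _ ↦ N ^ (1 / p) : Ω → ℝ≥0∞) ω ^ p ∂P) ^ (1 / p) := by
        gcongr with ω
        exact Wp_le_add hp
    _ ≤ (∫⁻ ω, (M ω ^ (1 / p)) ^ p ∂P) ^ (1 / p) + (∫⁻ _, (N ^ (1 / p)) ^ p ∂P) ^ (1 / p) :=
        ENNReal.lintegral_Lp_add_le (hμ.pow_const _) aemeasurable_const hp
    _ = _ := by simp [one_div, ENNReal.rpow_inv_rpow hp0.ne']

end Wasserstein

lemma lintegral_lintegral_le_of_forall_le {α β : Type*} [MeasurableSpace α] [MeasurableSpace β]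
    [Countable β] [MeasurableSingletonClass β] {μ : Measure α} [SFinite μ] {Q : Measure β}
    [IsProbabilityMeasure Q] {F : β → α → ℝ≥0∞} (hF : ∀ b, Measurable (F b)) {C : ℝ≥0∞}
    (hC : ∀ b, ∫⁻ a, F b a ∂μ ≤ C) :
    ∫⁻ a, ∫⁻ b, F b a ∂Q ∂μ ≤ C := by
  rw [lintegral_lintegral_swap (measurable_from_prod_countable_left hF).aemeasurable]
  calc ∫⁻ b, ∫⁻ a, F b a ∂μ ∂Q ≤ ∫⁻ _, C ∂Q := lintegral_mono hC
    _ = C := by simp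

lemma permStat_eq_sum (n k : ℕ) (x : Fin n → ℝ) (τ : Equiv.Perm (Fin n)) :
    permStat n k x τ = ∑ i : Fin n, ((if (i : ℕ) < k then 1 else 0) - (k : ℝ) / n) * x (τ i) := by
  rw [permStat, ← Equiv.sum_comp τ x, Finset.mul_sum, ← Finset.sum_sub_distrib]
  refine Finset.sum_congr rfl fun i _ ↦ ?_
  split_ifs <;> ring

lemma permStat_one {n k : ℕ} (hkn : k ≤ n) (f : ℕ → ℝ) :
    permStat n k (fun i ↦ f i) 1
      = ∑ i ∈ Finset.range k, f i - (k : ℝ) / n * ∑ i ∈ Finset.range n, f i := by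
  have hfilter : (Finset.range n).filter (· < k) = Finset.range k := by
    ext i
    simp only [Finset.mem_filter, Finset.mem_range]
    omega
  simp only [permStat, Equiv.Perm.coe_one, id]
  rw [Fin.sum_univ_eq_sum_range (fun i ↦ if i < k then f i else 0),
    Fin.sum_univ_eq_sum_range f, ← Finset.sum_filter, hfilter]

lemma sum_indicator_sub_sq {n k : ℕ} (hkn : k ≤ n) :
    ∑ i : Fin n, ((if (i : ℕ) < k then 1 else 0) - (k : ℝ) / n) ^ 2 = (k : ℝ) * (n - k) / n := by
  have hlow : ∑ i ∈ Finset.range k, ((if i < k then 1 else 0) - (k : ℝ) / n) ^ 2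
      = k * (1 - (k : ℝ) / n) ^ 2 := by
    rw [Finset.sum_congr rfl fun i hi ↦ by rw [if_pos (Finset.mem_range.1 hi)]]
    simp
  have hhigh : ∑ i ∈ Finset.Ico k n, ((if i < k then 1 else 0) - (k : ℝ) / n) ^ 2
      = (n - k) * ((k : ℝ) / n) ^ 2 := by
    rw [Finset.sum_congr rfl fun i hi ↦ by rw [if_neg (Finset.mem_Ico.1 hi).1.not_gt]]
    simp [Nat.cast_sub hkn]
  rw [Fin.sum_univ_eq_sum_range (fun i ↦ ((if i < k then 1 else 0) - (k : ℝ) / n) ^ 2),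
    ← Finset.sum_range_add_sum_Ico _ hkn, hlow, hhigh]
  rcases Nat.eq_zero_or_pos n with rfl | hn
  · simp [Nat.le_zero.1 hkn]
  · field_simp
    ring

lemma lintegral_abs_permStat_rpow_le {Ω : Type*} [MeasurableSpace Ω] {P : Measure Ω}
    [IsProbabilityMeasure P] {Y : ℕ → Ω → ℝ} (hmeas : ∀ i, Measurable (Y i))
    (hindep : iIndepFun Y P) {a b m : ℝ} (hY : ∀ i, ∀ᵐ ω ∂P, Y i ω ∈ Set.Icc a b)
    (hmean : ∀ i, P[Y i] = m) {n k : ℕ} (hkn : k ≤ n) {p : ℝ} (hp : 2 ≤ p)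
    (τ : Equiv.Perm (Fin n)) :
    ∫⁻ ω, ENNReal.ofReal (|permStat n k (fun i : Fin n ↦ Y i ω - m) τ| ^ p) ∂P
      ≤ ENNReal.ofReal √(2 * (p - 1) * (k * (n - k) / n * ((b - a) / 2) ^ 2)) ^ p := by
  -- After reindexing by `τ` the weights no longer depend on `τ`.
  have hsub := hasSubgaussianMGF_sum_mul_sub (Y := fun i : Fin n ↦ Y (τ i))
    (hindep.precomp (Fin.val_injective.comp τ.injective)) (fun i ↦ (hmeas _).aemeasurable)
    (fun i ↦ hY _) (fun i ↦ hmean _) (fun i ↦ (if (i : ℕ) < k then 1 else 0) - (k : ℝ) / n)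
    Finset.univ
  have hmoment := hsub.lintegral_abs_rpow_le_of_two_le hp
  rw [Real.coe_toNNReal _ (by positivity), sum_indicator_sub_sq hkn] at hmoment
  simpa only [permStat_eq_sum] using hmoment

instance {n : ℕ} : MeasurableSingletonClass (Equiv.Perm (Fin n)) :=
  ⟨fun _ ↦ MeasurableSpace.measurableSet_top⟩

instance {n k : ℕ} {x : Fin n → ℝ} : IsProbabilityMeasure (permLaw n k x) :=
  have := isProbabilityMeasure_uniformOn (Set.finite_univ (α := Equiv.Perm (Fin n)))
    Set.univ_nonempty
  Measure.isProbabilityMeasure_map measurable_from_top.aemeasurable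

lemma lintegral_permLaw {n k : ℕ} (x : Fin n → ℝ) {f : ℝ → ℝ≥0∞} (hf : Measurable f) :
    ∫⁻ y, f y ∂permLaw n k x = ∫⁻ τ, f (permStat n k x τ) ∂uniformOn Set.univ :=
  lintegral_map hf measurable_from_top

lemma measurable_permStat {Ω : Type*} [MeasurableSpace Ω] {n k : ℕ} {X : Ω → Fin n → ℝ}
    (hX : ∀ i, Measurable fun ω ↦ X ω i) (τ : Equiv.Perm (Fin n)) :
    Measurable fun ω ↦ permStat n k (X ω) τ := by
  simp only [permStat_eq_sum]
  fun_prop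

section RandomWasserstein

variable {Ω : Type*} [MeasurableSpace Ω] {P : Measure Ω} [IsProbabilityMeasure P]
  {ν : Measure ℝ} [IsProbabilityMeasure ν] {p : ℝ} {C D : ℝ≥0∞}

lemma Wp_map_le {f : Ω → ℝ} (hf : Measurable f) (hp : 1 ≤ p)
    (hC : ∫⁻ ω, ENNReal.ofReal (|f ω| ^ p) ∂P ≤ C)
    (hD : ∫⁻ x, ENNReal.ofReal (|x| ^ p) ∂ν ≤ D) :
    Wp p (P.map f) ν ≤ C ^ (1 / p) + D ^ (1 / p) := by
  have := Measure.isProbabilityMeasure_map hf.aemeasurable (μ := P)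
  refine (Wp_le_add hp).trans ?_
  rw [lintegral_map (by fun_prop) hf]
  gcongr

lemma lintegral_Wp_permLaw_rpow_le {n k : ℕ} {X : Ω → Fin n → ℝ}
    (hX : ∀ i, Measurable fun ω ↦ X ω i) (hp : 1 ≤ p)
    (hC : ∀ τ, ∫⁻ ω, ENNReal.ofReal (|permStat n k (X ω) τ| ^ p) ∂P ≤ C)
    (hD : ∫⁻ x, ENNReal.ofReal (|x| ^ p) ∂ν ≤ D) :
    (∫⁻ ω, Wp p (permLaw n k (X ω)) ν ^ p ∂P) ^ (1 / p) ≤ C ^ (1 / p) + D ^ (1 / p) := by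
  have := isProbabilityMeasure_uniformOn (Set.finite_univ (α := Equiv.Perm (Fin n)))
    Set.univ_nonempty
  have hmeas (τ : Equiv.Perm (Fin n)) :
      Measurable fun ω ↦ ENNReal.ofReal (|permStat n k (X ω) τ| ^ p) :=
    (measurable_permStat hX τ).abs.pow_const p |>.ennreal_ofReal
  have habs : Measurable fun y : ℝ ↦ ENNReal.ofReal (|y| ^ p) := by fun_prop
  refine (lintegral_Wp_rpow_le hp ?_).trans ?_
  · simp_rw [lintegral_permLaw _ habs]
    exact (Measurable.lintegral_prod_right
      (measurable_from_prod_countable_left hmeas)).aemeasurable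
  · simp_rw [lintegral_permLaw _ habs]
    gcongr
    exact lintegral_lintegral_le_of_forall_le hmeas hC

end RandomWasserstein

lemma sqrt_add_sqrt_le {p q σ R : ℝ} (hp : 1 ≤ p) (hq : 0 ≤ q) (hσ : 0 < σ) (hσR : 2 * σ ≤ R) :
    √(2 * (p - 1) * (q * (R / 2) ^ 2)) + √(2 * (p - 1) * (σ ^ 2 * q))
      ≤ √(p - 1) * √(σ ^ 2 * q) * (1 + √2 * R / σ) := by
  have hp1 : 0 ≤ p - 1 := by linarith
  have hR : √(2 * (p - 1) * (q * (R / 2) ^ 2)) = √2 * √(p - 1) * √q * (R / 2) := by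
    rw [sqrt_mul (by positivity), sqrt_mul zero_le_two, sqrt_mul hq, sqrt_sq (by linarith)]
    ring
  have hσq : √(σ ^ 2 * q) = σ * √q := by rw [sqrt_mul (sq_nonneg σ), sqrt_sq hσ.le]
  have hσ' : √(2 * (p - 1) * (σ ^ 2 * q)) = √2 * √(p - 1) * (σ * √q) := by
    rw [sqrt_mul (by positivity), sqrt_mul zero_le_two, hσq]
  have hkey : √2 * (R / 2) + √2 * σ ≤ σ + √2 * R := by
    nlinarith [sqrt_nonneg 2]
  rw [hR, hσ', hσq]
  calc √2 * √(p - 1) * √q * (R / 2) + √2 * √(p - 1) * (σ * √q)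
      = √(p - 1) * √q * (√2 * (R / 2) + √2 * σ) := by ring
    _ ≤ √(p - 1) * √q * (σ + √2 * R) := by gcongr
    _ = √(p - 1) * (σ * √q) * (1 + √2 * R / σ) := by field_simp


theorem conditional_wasserstein_trivial_bound_general {Ω : Type*} [MeasurableSpace Ω]
    (P : Measure Ω) [IsProbabilityMeasure P]
    (R σ : ℝ) (hσ : 0 < σ) (Y : ℕ → Ω → ℝ)
    (hmeas : ∀ i, Measurable (Y i))
    (hindep : iIndepFun Y P)
    (hident : ∀ i, P.map (Y i) = P.map (Y 0))
    (hbound : ∀ᵐ ω ∂P, Y 0 ω ∈ Set.Icc 0 R)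
    (hvar : variance (Y 0) P = σ ^ 2)
    (n k : ℕ) (hkn : k < n) (p : ℝ) (hp : 2 ≤ p) :
    (∫⁻ ω, (Wp p (permLaw n k (fun i : Fin n => Y (i : ℕ) ω - ∫ x, Y 0 x ∂P))
          (gaussianReal 0 (Real.toNNReal (σ ^ 2 * k * ((n : ℝ) - k) / n)))) ^ p ∂P)
        ^ (1 / p)
      ≤ ENNReal.ofReal (Real.sqrt (p - 1)
          * Real.sqrt (σ ^ 2 * k * ((n : ℝ) - k) / n) * (1 + Real.sqrt 2 * R / σ)) ∧
    Wp p (P.map (fun ω => (∑ i ∈ Finset.range k, (Y i ω - ∫ x, Y 0 x ∂P))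
            - (k : ℝ) / (n : ℝ) * ∑ i ∈ Finset.range n, (Y i ω - ∫ x, Y 0 x ∂P)))
        (gaussianReal 0 (Real.toNNReal (σ ^ 2 * k * ((n : ℝ) - k) / n)))
      ≤ ENNReal.ofReal (Real.sqrt (p - 1)
          * Real.sqrt (σ ^ 2 * k * ((n : ℝ) - k) / n) * (1 + Real.sqrt 2 * R / σ)) := by
  have hp0 : 0 < p := by linarith
  have hq : 0 ≤ (k : ℝ) * (n - k) / n :=
    div_nonneg (mul_nonneg k.cast_nonneg (sub_nonneg.2 (by exact_mod_cast hkn.le))) n.cast_nonneg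
  have hid (i : ℕ) : IdentDistrib (Y i) (Y 0) P P :=
    ⟨(hmeas i).aemeasurable, (hmeas 0).aemeasurable, hident i⟩
  have hY (i : ℕ) : ∀ᵐ ω ∂P, Y i ω ∈ Set.Icc 0 R := (hid i).symm.ae_mem_snd measurableSet_Icc hbound
  have hσR : 2 * σ ≤ R := by
    obtain ⟨ω, hω⟩ := hbound.exists
    have := hvar ▸ variance_le_sq_of_bounded hbound (hmeas 0).aemeasurable
    nlinarith [hω.1.trans hω.2]
  have hstat := lintegral_abs_permStat_rpow_le hmeas hindep hY (fun i ↦ (hid i).integral_eq)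
    hkn.le hp
  rw [sub_zero] at hstat
  rw [show σ ^ 2 * k * ((n : ℝ) - k) / n = σ ^ 2 * (k * (n - k) / n) by ring]
  have hgauss := (hasSubgaussianMGF_gaussianReal (σ ^ 2 * (k * (n - k) / n)).toNNReal
    ).lintegral_abs_rpow_le_of_two_le hp
  rw [Real.coe_toNNReal _ (by positivity)] at hgauss
  have hsum : (ENNReal.ofReal √(2 * (p - 1) * (k * (n - k) / n * (R / 2) ^ 2)) ^ p) ^ (1 / p)
      + (ENNReal.ofReal √(2 * (p - 1) * (σ ^ 2 * (k * (n - k) / n))) ^ p) ^ (1 / p)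
      ≤ ENNReal.ofReal (√(p - 1) * √(σ ^ 2 * (k * (n - k) / n)) * (1 + √2 * R / σ)) := by
    rw [one_div, ENNReal.rpow_rpow_inv hp0.ne', ENNReal.rpow_rpow_inv hp0.ne',
      ← ENNReal.ofReal_add (sqrt_nonneg _) (sqrt_nonneg _)]
    exact ENNReal.ofReal_le_ofReal (sqrt_add_sqrt_le (by linarith) hq hσ hσR)
  have hX (i : Fin n) : Measurable fun ω ↦ Y i ω - ∫ x, Y 0 x ∂P := (hmeas i).sub_const _
  refine ⟨(lintegral_Wp_permLaw_rpow_le hX (by linarith) hstat hgauss).trans hsum, ?_⟩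
  simp_rw [← permStat_one hkn.le]
  exact (Wp_map_le (measurable_permStat hX 1) (by linarith) (hstat 1) hgauss).trans hsum

/-- **trivial conditional Wasserstein bound.** Under Assumption (R,σ),
for `1 ≤ k < n` and `p ≥ 2`, with `σ_{n,k}² = σ² k(n−k)/n`:
`(E[W_p(ν_{(X_1,…,X_n),k}, N(0,σ_{n,k}²))^p])^{1/p} ≤ √(p−1) σ_{n,k} (1 + √2 R/σ)`,
and also `W_p(W_k, N(0,σ_{n,k}²)) ≤ √(p−1) σ_{n,k} (1 + √2 R/σ)`. -/
theorem conditional_wasserstein_trivial_bound {Ω : Type*} [MeasurableSpace Ω]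
    (P : Measure Ω) [IsProbabilityMeasure P]
    (R σ : ℝ) (hR : 0 < R) (hσ : 0 < σ) (Y : ℕ → Ω → ℝ)
    (hmeas : ∀ i, Measurable (Y i))
    (hindep : iIndepFun Y P)
    (hident : ∀ i, P.map (Y i) = P.map (Y 0))
    (hbound : ∀ᵐ ω ∂P, Y 0 ω ∈ Set.Icc 0 R)
    (hvar : variance (Y 0) P = σ ^ 2)
    (n k : ℕ) (hk : 1 ≤ k) (hkn : k < n) (p : ℝ) (hp : 2 ≤ p) :
    (∫⁻ ω, (Wp p (permLaw n k (fun i : Fin n => Y (i : ℕ) ω - ∫ x, Y 0 x ∂P))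
          (gaussianReal 0 (Real.toNNReal (σ ^ 2 * k * ((n : ℝ) - k) / n)))) ^ p ∂P)
        ^ (1 / p)
      ≤ ENNReal.ofReal (Real.sqrt (p - 1)
          * Real.sqrt (σ ^ 2 * k * ((n : ℝ) - k) / n) * (1 + Real.sqrt 2 * R / σ)) ∧
    Wp p (P.map (fun ω => (∑ i ∈ Finset.range k, (Y i ω - ∫ x, Y 0 x ∂P))
            - (k : ℝ) / (n : ℝ) * ∑ i ∈ Finset.range n, (Y i ω - ∫ x, Y 0 x ∂P)))
        (gaussianReal 0 (Real.toNNReal (σ ^ 2 * k * ((n : ℝ) - k) / n)))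
      ≤ ENNReal.ofReal (Real.sqrt (p - 1)
          * Real.sqrt (σ ^ 2 * k * ((n : ℝ) - k) / n) * (1 + Real.sqrt 2 * R / σ)) :=
  conditional_wasserstein_trivial_bound_general P R σ hσ Y hmeas hindep hident hbound hvar n k hkn p
    hp
end

section
/- Let Z ~ N(0,1), let k ∈ ℕ, and let p ≥ 2 be a real number. Then ‖ H_k(Z) ‖_{L^p} ≤ √(k!) · (p − 1)^{k/2}, where H_k is the k-th probabilists' Hermite polynomial. -/
/-!
Write `M k = E |H_k(Z)|^p`. Since `H_{n+1} = X H_n - H_n'`, Stein's lemma `E[Z f(Z)] = E[f'(Z)]`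
applied to `f = H_n g` gives `E[H_{n+1} g] = E[H_n g']`. For `g = φ ∘ H_{n+1}` with
`φ t = t |t|^(p-2)`, and since `H_{n+1}' = (n+1) H_n`, this reads
`M (n+1) = (n+1)(p-1) E[H_n² |H_{n+1}|^(p-2)]`. Hölder's inequality with weights `2/p` and
`1 - 2/p` bounds the right side by `(n+1)(p-1) (M n)^(2/p) (M (n+1))^(1-2/p)`, so
`(M (n+1))^(2/p) ≤ (n+1)(p-1) (M n)^(2/p)`, and by induction `(M k)^(2/p) ≤ k! (p-1)^k`.
Integrability comes from `|P x| ≤ C e^|x|` for polynomials and the finiteness of the Gaussian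
moment generating function.
-/

open MeasureTheory ProbabilityTheory Polynomial Real
open scoped NNReal

theorem hasDerivAt_mul_abs_rpow {q : ℝ} (hq : 0 ≤ q) (t : ℝ) :
    HasDerivAt (fun t : ℝ => t * |t| ^ q) ((q + 1) * |t| ^ q) t := by
  refine hasDerivAt_of_hasDerivAt_of_ne' (E := ℝ) (x := 0) (g := fun t => (q + 1) * |t| ^ q)
    (fun s hs => ?_) ?_ ?_ t
  · have hs' : |s| ≠ 0 := abs_ne_zero.2 hs
    refine ((hasDerivAt_id' s).mul ((hasDerivAt_abs hs).rpow_const (Or.inl hs'))).congr_deriv ?_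
    rw [rpow_sub_one hs', ← mul_assoc, ← mul_assoc, self_mul_sign]
    field_simp
    ring
  · exact (continuous_id.mul (continuous_abs.rpow_const fun _ => Or.inr hq)).continuousAt
  · exact ((continuous_abs.rpow_const fun _ => Or.inr hq).const_mul _).continuousAt

theorem abs_mul_abs_rpow (t : ℝ) {q : ℝ} (hq : q + 1 ≠ 0) : |t * |t| ^ q| = |t| ^ (q + 1) := by
  rw [rpow_add_one' (abs_nonneg t) hq, abs_mul, abs_of_nonneg (rpow_nonneg (abs_nonneg t) q),
    mul_comm]

theorem mul_mul_abs_rpow (t : ℝ) {q : ℝ} (hq : q + 2 ≠ 0) :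
    t * (t * |t| ^ q) = |t| ^ (q + 2) := by
  rw [rpow_add' (abs_nonneg t) hq, rpow_two, sq_abs]
  ring

theorem rpow_le_of_le_mul_rpow_one_sub {M K θ : ℝ} (hM : 0 ≤ M) (hK : 0 ≤ K) (hθ : 0 < θ)
    (h : M ≤ K * M ^ (1 - θ)) : M ^ θ ≤ K := by
  rcases hM.eq_or_lt with rfl | hM
  · rwa [zero_rpow hθ.ne']
  · rw [rpow_sub hM, rpow_one, mul_div_assoc', le_div_iff₀ (rpow_pos_of_pos hM θ)] at h
    exact le_of_mul_le_mul_right (by linarith) hM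

theorem integral_rpow_mul_rpow_le {α : Type*} [MeasurableSpace α] {μ : Measure α} {f g : α → ℝ}
    (hf : 0 ≤ᵐ[μ] f) (hg : 0 ≤ᵐ[μ] g) (hfi : Integrable f μ) (hgi : Integrable g μ) {a b : ℝ}
    (ha : 0 ≤ a) (hb : 0 ≤ b) (hab : a + b = 1) :
    ∫ x, f x ^ a * g x ^ b ∂μ ≤ (∫ x, f x ∂μ) ^ a * (∫ x, g x ∂μ) ^ b := by
  have hfg : ∀ᵐ x ∂μ, ENNReal.ofReal (f x ^ a * g x ^ b)
      = ENNReal.ofReal (f x) ^ a * ENNReal.ofReal (g x) ^ b := by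
    filter_upwards [hf, hg] with x hfx hgx
    rw [ENNReal.ofReal_mul (rpow_nonneg hfx a), ENNReal.ofReal_rpow_of_nonneg hfx ha,
      ENNReal.ofReal_rpow_of_nonneg hgx hb]
  have hholder := ENNReal.lintegral_mul_norm_pow_le hfi.aemeasurable.ennreal_ofReal
    hgi.aemeasurable.ennreal_ofReal ha hb hab
  rw [← lintegral_congr_ae hfg] at hholder
  rw [integral_eq_lintegral_of_nonneg_ae _ _, integral_eq_lintegral_of_nonneg_ae hf
    hfi.aestronglyMeasurable, integral_eq_lintegral_of_nonneg_ae hg hgi.aestronglyMeasurable,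
    ENNReal.toReal_rpow, ENNReal.toReal_rpow, ← ENNReal.toReal_mul]
  · exact ENNReal.toReal_mono (ENNReal.mul_ne_top
      (ENNReal.rpow_ne_top_of_nonneg ha hfi.lintegral_lt_top.ne)
      (ENNReal.rpow_ne_top_of_nonneg hb hgi.lintegral_lt_top.ne)) hholder
  · filter_upwards [hf, hg] with x hfx hgx
    exact mul_nonneg (rpow_nonneg hfx a) (rpow_nonneg hgx b)
  · exact ((hfi.aemeasurable.pow_const a).mul (hgi.aemeasurable.pow_const b)).aestronglyMeasurable

theorem hasDerivAt_gaussianPDFReal (μ : ℝ) (v : ℝ≥0) (x : ℝ) :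
    HasDerivAt (gaussianPDFReal μ v) (-((x - μ) / v) * gaussianPDFReal μ v x) x := by
  rw [gaussianPDFReal_def]
  exact ((((hasDerivAt_id' x).sub_const μ).pow 2).neg.div_const (2 * (v : ℝ))).exp.const_mul
    (√(2 * π * v))⁻¹ |>.congr_deriv (by simp only [Pi.neg_apply, Pi.pow_apply]; ring)

theorem integrable_gaussianReal_iff {μ : ℝ} {v : ℝ≥0} (hv : v ≠ 0) {g : ℝ → ℝ} :
    Integrable g (gaussianReal μ v) ↔ Integrable (fun x => gaussianPDFReal μ v x * g x) := by
  rw [gaussianReal_of_var_ne_zero _ hv, integrable_withDensity_iff_integrable_smul'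
    (measurable_gaussianPDF μ v) (ae_of_all _ fun _ => gaussianPDF_lt_top)]
  simp only [toReal_gaussianPDF, smul_eq_mul]

/-- Stein's lemma. -/
theorem integral_sub_mul_gaussianReal_eq_mul_integral_deriv {μ : ℝ} {v : ℝ≥0} {g g' : ℝ → ℝ}
    (hg : ∀ x, HasDerivAt g (g' x) x) (hgi : Integrable g (gaussianReal μ v))
    (hg'i : Integrable g' (gaussianReal μ v))
    (hxgi : Integrable (fun x => (x - μ) * g x) (gaussianReal μ v)) :
    ∫ x, (x - μ) * g x ∂gaussianReal μ v = v * ∫ x, g' x ∂gaussianReal μ v := by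
  rcases eq_or_ne v 0 with rfl | hv
  · simp
  set ρ := gaussianPDFReal μ v
  have hderiv : ∀ x, HasDerivAt (fun x => ρ x * g x)
      (ρ x * (g' x - (v : ℝ)⁻¹ * ((x - μ) * g x))) x := fun x =>
    ((hasDerivAt_gaussianPDFReal μ v x).mul (hg x)).congr_deriv (by ring)
  have hzero := integral_eq_zero_of_hasDerivAt_of_integrable hderiv
    ((integrable_gaussianReal_iff hv).1 (hg'i.sub (hxgi.const_mul (v : ℝ)⁻¹)))
    ((integrable_gaussianReal_iff hv).1 hgi)
  simp_rw [← smul_eq_mul (a := ρ _)] at hzero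
  rw [← integral_gaussianReal_eq_integral_smul hv, integral_sub hg'i (hxgi.const_mul _),
    integral_const_mul, sub_eq_zero] at hzero
  have hv' : (v : ℝ) ≠ 0 := by exact_mod_cast hv
  rw [hzero, mul_inv_cancel_left₀ hv']

theorem Polynomial.exists_abs_aeval_le_mul_exp_abs {R : Type*} [CommSemiring R] [Algebra R ℝ]
    (P : R[X]) : ∃ C, ∀ x : ℝ, |aeval x P| ≤ C * exp |x| := by
  refine ⟨∑ i ∈ Finset.range (P.natDegree + 1), |algebraMap R ℝ (P.coeff i)| * i.factorial,
    fun x => ?_⟩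
  rw [aeval_eq_sum_range, Finset.sum_mul]
  refine (Finset.abs_sum_le_sum_abs _ _).trans (Finset.sum_le_sum fun i _ => ?_)
  have hpow : |x| ^ i ≤ i.factorial * exp |x| := by
    have := pow_div_factorial_le_exp _ (abs_nonneg x) i
    rwa [div_le_iff₀ (by positivity), mul_comm] at this
  rw [Algebra.smul_def, abs_mul, abs_pow, mul_assoc]
  exact mul_le_mul_of_nonneg_left hpow (abs_nonneg _)

theorem integrable_gaussianReal_of_abs_le_mul_exp {μ : ℝ} {v : ℝ≥0} {f : ℝ → ℝ} {C a : ℝ}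
    (hf : AEStronglyMeasurable f (gaussianReal μ v)) (hb : ∀ x, |f x| ≤ C * exp (a * |x|)) :
    Integrable f (gaussianReal μ v) := by
  have hC : 0 ≤ C := by simpa using (abs_nonneg _).trans (hb 0)
  refine (((integrable_exp_mul_gaussianReal a).add
    (integrable_exp_mul_gaussianReal (-a))).const_mul C).mono' hf (ae_of_all _ fun x => ?_)
  refine (hb x).trans (mul_le_mul_of_nonneg_left ?_ hC)
  rcases abs_choice x with h | h <;> rw [h] <;> simp [(exp_pos _).le]

theorem integrable_gaussianReal_of_abs_le_aeval_mul_rpow {μ : ℝ} {v : ℝ≥0} {R : Type*}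
    [CommSemiring R] [Algebra R ℝ] {f : ℝ → ℝ} (hf : AEStronglyMeasurable f (gaussianReal μ v))
    (P Q : R[X]) {r : ℝ} (hr : 0 ≤ r) (hb : ∀ x, |f x| ≤ |aeval x P| * |aeval x Q| ^ r) :
    Integrable f (gaussianReal μ v) := by
  obtain ⟨C, hC⟩ := P.exists_abs_aeval_le_mul_exp_abs
  obtain ⟨D, hD⟩ := Q.exists_abs_aeval_le_mul_exp_abs
  refine integrable_gaussianReal_of_abs_le_mul_exp hf (C := C * D ^ r) (a := 1 + r) fun x => ?_
  have hD0 : 0 ≤ D := by simpa using (abs_nonneg _).trans (hD 0)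
  calc |f x| ≤ |aeval x P| * |aeval x Q| ^ r := hb x
    _ ≤ (C * exp |x|) * (D * exp |x|) ^ r := by
      gcongr
      exacts [(abs_nonneg _).trans (hC x), hC x, hD x]
    _ = C * D ^ r * exp ((1 + r) * |x|) := by
      rw [mul_rpow hD0 (exp_pos _).le, ← exp_mul, add_mul, one_mul, exp_add, mul_comm r]
      ring

theorem integrable_abs_aeval_rpow_gaussianReal {μ : ℝ} {v : ℝ≥0} {R : Type*} [CommSemiring R]
    [Algebra R ℝ] (P : R[X]) {p : ℝ} (hp : 0 ≤ p) :
    Integrable (fun x => |aeval x P| ^ p) (gaussianReal μ v) :=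
  integrable_gaussianReal_of_abs_le_aeval_mul_rpow
    (P.continuous_aeval.abs.rpow_const fun _ => Or.inr hp).aestronglyMeasurable (1 : R[X]) P hp
    fun x => by simp [abs_of_nonneg (rpow_nonneg (abs_nonneg _) _)]

theorem Polynomial.derivative_hermite_succ (n : ℕ) :
    derivative (hermite (n + 1)) = ((n : ℤ[X]) + 1) * hermite n := by
  induction n with
  | zero => simp [hermite_succ, hermite_zero]
  | succ n ih =>
    rw [hermite_succ (n + 1), derivative_sub, derivative_mul, derivative_X, one_mul, ih,
      derivative_mul, hermite_succ n]
    simp only [derivative_add, derivative_natCast, derivative_one]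
    push_cast
    ring

theorem integral_aeval_hermite_succ_mul_gaussianReal (n : ℕ) {g g' : ℝ → ℝ}
    (hg : ∀ x, HasDerivAt g (g' x) x)
    (hi : Integrable (fun x => aeval x (hermite n) * g x) (gaussianReal 0 1))
    (hxi : Integrable (fun x => x * (aeval x (hermite n) * g x)) (gaussianReal 0 1))
    (hdi : Integrable (fun x => aeval x (derivative (hermite n)) * g x) (gaussianReal 0 1))
    (hi' : Integrable (fun x => aeval x (hermite n) * g' x) (gaussianReal 0 1)) :
    ∫ x, aeval x (hermite (n + 1)) * g x ∂gaussianReal 0 1 =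
      ∫ x, aeval x (hermite n) * g' x ∂gaussianReal 0 1 := by
  have hstein := integral_sub_mul_gaussianReal_eq_mul_integral_deriv (μ := 0) (v := 1)
    (g := fun x => aeval x (hermite n) * g x)
    (g' := fun x => aeval x (derivative (hermite n)) * g x + aeval x (hermite n) * g' x)
    (fun x => ((hermite n).hasDerivAt_aeval x).mul (hg x)) hi (hdi.add hi')
    (by simpa only [sub_zero] using hxi)
  simp only [sub_zero, NNReal.coe_one, one_mul] at hstein
  calc ∫ x, aeval x (hermite (n + 1)) * g x ∂gaussianReal 0 1
      = ∫ x, x * (aeval x (hermite n) * g x) - aeval x (derivative (hermite n)) * g x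
          ∂gaussianReal 0 1 := by
        congr 1 with x
        simp only [hermite_succ, map_sub, map_mul, aeval_X]
        ring
    _ = ∫ x, aeval x (hermite n) * g' x ∂gaussianReal 0 1 := by
        rw [integral_sub hxi hdi, hstein, integral_add hdi hi', add_sub_cancel_left]

theorem integral_abs_aeval_hermite_succ_rpow {p : ℝ} (hp : 2 ≤ p) (n : ℕ) :
    ∫ x, |aeval x (hermite (n + 1))| ^ p ∂gaussianReal 0 1 = (n + 1) * (p - 1) *
      ∫ x, aeval x (hermite n) ^ 2 * |aeval x (hermite (n + 1))| ^ (p - 2) ∂gaussianReal 0 1 := by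
  set F : ℝ → ℝ := fun x => aeval x (hermite n)
  set G : ℝ → ℝ := fun x => aeval x (hermite (n + 1))
  obtain ⟨q, hq, rfl⟩ : ∃ q, 0 ≤ q ∧ p = q + 2 := ⟨p - 2, by linarith, by ring⟩
  have hq1 : q + 1 ≠ 0 := by linarith
  have hG : ∀ x, HasDerivAt G ((n + 1) * F x) x := fun x => by
    simpa only [derivative_hermite_succ, map_mul, map_add, map_one, map_natCast]
      using (hermite (n + 1)).hasDerivAt_aeval x
  have hintegrable : ∀ {f : ℝ → ℝ} (P : ℤ[X]) (r : ℝ), Continuous f → 0 ≤ r →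
      (∀ x, |f x| = |aeval x P| * |G x| ^ r) → Integrable f (gaussianReal 0 1) :=
    fun P _ hf hr hb => integrable_gaussianReal_of_abs_le_aeval_mul_rpow
      hf.aestronglyMeasurable P (hermite (n + 1)) hr fun x => (hb x).le
  have hFc : Continuous F := (hermite n).continuous_aeval
  have hGc : Continuous G := (hermite (n + 1)).continuous_aeval
  have hGqc : Continuous fun x => |G x| ^ q := hGc.abs.rpow_const fun _ => Or.inr hq
  have hJI : Integrable (fun x => F x ^ 2 * |G x| ^ q) (gaussianReal 0 1) :=
    hintegrable (hermite n ^ 2) q ((hFc.pow 2).mul hGqc) hq fun x => by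
      rw [abs_mul, map_pow, abs_of_nonneg (rpow_nonneg (abs_nonneg _) _)]
  have key := integral_aeval_hermite_succ_mul_gaussianReal n (g := fun x => G x * |G x| ^ q)
    (g' := fun x => (q + 1) * |G x| ^ q * ((n + 1) * F x))
    (fun x => (hasDerivAt_mul_abs_rpow hq (G x)).comp x (hG x))
    (hintegrable (hermite n) (q + 1) (hFc.mul (hGc.mul hGqc)) (by linarith) fun x => by
      rw [abs_mul, abs_mul_abs_rpow _ hq1])
    (hintegrable (X * hermite n) (q + 1) (continuous_id.mul (hFc.mul (hGc.mul hGqc)))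
      (by linarith) fun x => by
        rw [map_mul, aeval_X, abs_mul x, abs_mul x, abs_mul (F x), abs_mul_abs_rpow _ hq1,
          mul_assoc])
    (hintegrable (derivative (hermite n)) (q + 1)
      ((derivative (hermite n)).continuous_aeval.mul (hGc.mul hGqc)) (by linarith) fun x => by
        rw [abs_mul, abs_mul_abs_rpow _ hq1])
    ((hJI.const_mul ((q + 1) * (n + 1))).congr (ae_of_all _ fun x => by ring))
  calc ∫ x, |G x| ^ (q + 2) ∂gaussianReal 0 1
      = ∫ x, G x * (G x * |G x| ^ q) ∂gaussianReal 0 1 := by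
        simp only [mul_mul_abs_rpow _ (by linarith : (0:ℝ) < q + 2).ne']
    _ = ∫ x, (q + 1) * (n + 1) * (F x ^ 2 * |G x| ^ q) ∂gaussianReal 0 1 := by
        rw [key]
        congr 1 with x
        ring
    _ = (n + 1) * (q + 2 - 1) * ∫ x, F x ^ 2 * |G x| ^ (q + 2 - 2) ∂gaussianReal 0 1 := by
        rw [integral_const_mul, add_sub_cancel_right]
        ring

theorem integral_abs_aeval_hermite_succ_rpow_le {p : ℝ} (hp : 2 ≤ p) (n : ℕ) :
    (∫ x, |aeval x (hermite (n + 1))| ^ p ∂gaussianReal 0 1) ^ (2 / p) ≤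
      (n + 1) * (p - 1) * (∫ x, |aeval x (hermite n)| ^ p ∂gaussianReal 0 1) ^ (2 / p) := by
  have hp0 : 0 < p := by linarith
  set M := ∫ x, |aeval x (hermite n)| ^ p ∂gaussianReal 0 1
  set M' := ∫ x, |aeval x (hermite (n + 1))| ^ p ∂gaussianReal 0 1
  have hholder := integral_rpow_mul_rpow_le
    (ae_of_all _ fun x => rpow_nonneg (abs_nonneg (aeval x (hermite n) : ℝ)) p)
    (ae_of_all _ fun x => rpow_nonneg (abs_nonneg (aeval x (hermite (n + 1)) : ℝ)) p)
    (integrable_abs_aeval_rpow_gaussianReal (μ := 0) (v := 1) _ hp0.le)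
    (integrable_abs_aeval_rpow_gaussianReal (μ := 0) (v := 1) _ hp0.le)
    (by positivity : 0 ≤ 2 / p) (by rw [sub_nonneg, div_le_one hp0]; exact hp) (add_sub_cancel _ 1)
  have hK : 0 ≤ (n + 1 : ℝ) * (p - 1) := mul_nonneg (by positivity) (by linarith)
  refine rpow_le_of_le_mul_rpow_one_sub (integral_nonneg fun _ => by positivity)
    (mul_nonneg hK (rpow_nonneg (integral_nonneg fun _ => by positivity) _)) (by positivity) ?_
  calc M' = (n + 1) * (p - 1) *
        ∫ x, aeval x (hermite n) ^ 2 * |aeval x (hermite (n + 1))| ^ (p - 2) ∂gaussianReal 0 1 :=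
        integral_abs_aeval_hermite_succ_rpow hp n
    _ ≤ (n + 1) * (p - 1) * (M ^ (2 / p) * M' ^ (1 - 2 / p)) := by
        gcongr
        refine (integral_congr_ae (ae_of_all _ fun x => ?_)).trans_le hholder
        rw [← rpow_mul (abs_nonneg _), ← rpow_mul (abs_nonneg _), mul_div_cancel₀ _ hp0.ne',
          mul_one_sub, mul_div_cancel₀ _ hp0.ne', rpow_two, sq_abs]
    _ = (n + 1) * (p - 1) * M ^ (2 / p) * M' ^ (1 - 2 / p) := by ring

theorem integral_abs_aeval_hermite_rpow_le {p : ℝ} (hp : 2 ≤ p) (k : ℕ) :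
    (∫ x, |aeval x (hermite k)| ^ p ∂gaussianReal 0 1) ^ (2 / p) ≤ k.factorial * (p - 1) ^ k := by
  induction k with
  | zero => simp [hermite_zero]
  | succ n ih =>
    calc _ ≤ (n + 1) * (p - 1) * (∫ x, |aeval x (hermite n)| ^ p ∂gaussianReal 0 1) ^ (2 / p) :=
          integral_abs_aeval_hermite_succ_rpow_le hp n
      _ ≤ (n + 1) * (p - 1) * (n.factorial * (p - 1) ^ n) := by
          gcongr
          exact mul_nonneg (by positivity) (by linarith)
      _ = (n + 1).factorial * (p - 1) ^ (n + 1) := by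
          push_cast [Nat.factorial_succ]
          ring

/-- For `Z ~ N(0,1)` and the `k`-th probabilists' Hermite polynomial `H_k`,
`‖H_k(Z)‖_{L^p} ≤ √(k!) · (p−1)^{k/2}` for every real `p ≥ 2`. -/
theorem hermite_Lp_norm_bound (k : ℕ) (p : ℝ) (hp : 2 ≤ p) :
    eLpNorm (fun x : ℝ => (Polynomial.aeval x (Polynomial.hermite k) : ℝ))
        (ENNReal.ofReal p) (gaussianReal 0 1)
      ≤ ENNReal.ofReal (Real.sqrt (Nat.factorial k) * (p - 1) ^ ((k : ℝ) / 2)) := by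
  have hp0 : 0 < p := by linarith
  have hp' : ENNReal.ofReal p ≠ 0 := by simpa using hp0
  have hmem : MemLp (fun x : ℝ => (aeval x (hermite k) : ℝ)) (ENNReal.ofReal p)
      (gaussianReal 0 1) :=
    (integrable_norm_rpow_iff (hermite k).continuous_aeval.aestronglyMeasurable hp'
      ENNReal.ofReal_ne_top).1 (by
        simpa [ENNReal.toReal_ofReal hp0.le] using
          integrable_abs_aeval_rpow_gaussianReal (μ := 0) (v := 1) (hermite k) hp0.le)
  rw [hmem.eLpNorm_eq_integral_rpow_norm hp' ENNReal.ofReal_ne_top, ENNReal.toReal_ofReal hp0.le]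
  refine ENNReal.ofReal_le_ofReal ?_
  calc (∫ x, ‖(aeval x (hermite k) : ℝ)‖ ^ p ∂gaussianReal 0 1) ^ p⁻¹
      = √((∫ x, |aeval x (hermite k)| ^ p ∂gaussianReal 0 1) ^ (2 / p)) := by
        rw [sqrt_eq_rpow, ← rpow_mul (integral_nonneg fun _ => by positivity)]
        simp only [Real.norm_eq_abs]
        ring_nf
    _ ≤ √(k.factorial * (p - 1) ^ k) := sqrt_le_sqrt (integral_abs_aeval_hermite_rpow_le hp k)
    _ = √k.factorial * (p - 1) ^ ((k : ℝ) / 2) := by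
        rw [sqrt_mul (by positivity), sqrt_eq_rpow ((p - 1) ^ k), ← rpow_natCast,
          ← rpow_mul (by linarith)]
        ring_nf
end
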